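/- arXiv:2005.13330 — 8 statements merged into one kernel-verified Lean document; each statement's English description precedes it below -/
import Mathlib

section
/- For every complex number a with Re(a) > 0 and every complex number b, the power series ∑_{k=0}^∞ z^k / Γ(b + a·k) converges absolutely for every z ∈ ℂ, and the function z ↦ ∑_{k=0}^∞ z^k / Γ(b + a·k) is analytic on all of ℂ (i.e., the Mittag-Leffler function E_{a,b} is an entire function). -/
/-!
The reflection formula `1 / Γ(w) = sin(π w) Γ(1 - w) / π` bounds `‖1 / Γ(w)‖` by `C e^{π |Im w|}`
on the strip `1/2 ≤ Re w ≤ 3/2`. Since `Γ(s + 1) = s Γ(s)` and `Re s ≤ ‖s‖`, the quantity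
`‖1 / Γ(s)‖ Γ(Re s)` can only decrease under `s ↦ s + 1`, so `‖1 / Γ(s)‖ ≤ C e^{π |Im s|} / Γ(Re s)`
whenever `Re s ≥ 1/2`. Along `s = b + a k` the numerator grows geometrically in `k`, while
`Γ(Re a · k + Re b)` outgrows every geometric sequence because `Γ(x) ≥ T^{x-1} e^{-T}` for every
`T ≥ 0`. Hence the coefficients `1 / Γ(b + a k)` define a power series of infinite radius.
-/

/-- The Mittag-Leffler function `E_{a,b}(z) = ∑_{k=0}^∞ z^k / Γ(b + a k)`. -/
noncomputable def mittagLeffler (a b z : ℂ) : ℂ :=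
  ∑' k : ℕ, z ^ k / Complex.Gamma (b + a * k)

open Filter Set Topology
open scoped Real

namespace Real

open MeasureTheory

lemma Gamma_le_sqrt_pi_of_mem_Icc {x : ℝ} (hx : x ∈ Icc (1 / 2 : ℝ) (3 / 2)) :
    Gamma x ≤ √π := by
  have h₃ : Gamma (3 / 2) = √π / 2 := by
    rw [show (3 / 2 : ℝ) = 1 / 2 + 1 by norm_num, Gamma_add_one (by norm_num),
      Gamma_one_half_eq]; ring
  refine (convexOn_Gamma.le_max_of_mem_Icc (by norm_num) (by norm_num) hx).trans ?_
  rw [Gamma_one_half_eq, h₃]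
  exact max_le le_rfl (by linarith [sqrt_nonneg π])

lemma rpow_sub_one_mul_exp_neg_le_Gamma {x T : ℝ} (hx : 1 ≤ x) (hT : 0 ≤ T) :
    T ^ (x - 1) * exp (-T) ≤ Gamma x := by
  have hx0 : 0 < x := by linarith
  have hint := GammaIntegral_convergent hx0
  rw [Gamma_eq_integral hx0, ← integral_exp_neg_Ioi, ← integral_const_mul]
  calc ∫ t in Ioi T, T ^ (x - 1) * exp (-t)
      ≤ ∫ t in Ioi T, exp (-t) * t ^ (x - 1) := by
        refine setIntegral_mono_on ((integrableOn_exp_neg_Ioi T).const_mul _)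
          (hint.mono_set (Ioi_subset_Ioi hT)) measurableSet_Ioi fun t ht => ?_
        rw [mul_comm]
        gcongr
        exact ht.le
    _ ≤ ∫ t in Ioi 0, exp (-t) * t ^ (x - 1) :=
        setIntegral_mono_set hint
          (ae_restrict_of_forall_mem measurableSet_Ioi fun t ht => by
            have : 0 < t := ht; positivity)
          (Ioi_subset_Ioi hT).eventuallyLE

lemma tendsto_pow_div_Gamma_mul_add_atTop (R β : ℝ) {α : ℝ} (hα : 0 < α) :
    Tendsto (fun k : ℕ => R ^ k / Gamma (α * k + β)) atTop (𝓝 0) := by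
  set Q := 2 * |R| + 1
  set T := Q ^ α⁻¹
  have hQ : 0 < Q := by positivity
  have hT : 0 < T := rpow_pos_of_pos hQ _
  have hTα : T ^ α = Q := rpow_inv_rpow hQ.le hα.ne'
  have hlarge : ∀ᶠ k : ℕ in atTop, 1 ≤ α * k + β := by
    obtain ⟨k₀, hk₀⟩ := exists_nat_ge ((1 - β) / α)
    filter_upwards [eventually_ge_atTop k₀] with k hk
    have : (1 - β) / α ≤ k := hk₀.trans (by exact_mod_cast hk)
    rw [div_le_iff₀ hα] at this
    linarith
  have hgeom : Tendsto (fun k : ℕ => T ^ (1 - β) * exp T * (1 / 2) ^ k)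
      atTop (𝓝 0) := by
    simpa using (tendsto_pow_atTop_nhds_zero_of_lt_one (r := (1 / 2 : ℝ)) (by norm_num)
      (by norm_num)).const_mul (T ^ (1 - β) * exp T)
  refine squeeze_zero_norm' ?_ hgeom
  filter_upwards [hlarge] with k hk
  have hlow := rpow_sub_one_mul_exp_neg_le_Gamma hk hT.le
  have hpow : T ^ (α * k + β - 1) = Q ^ k * T ^ (β - 1) := by
    rw [show α * k + β - 1 = α * k + (β - 1) by ring, rpow_add hT, rpow_mul hT.le, hTα,
      rpow_natCast]
  rw [hpow] at hlow
  have hpos : 0 < Q ^ k * T ^ (β - 1) * exp (-T) := by positivity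
  rw [norm_div, norm_pow, norm_of_nonneg (hpos.trans_le hlow).le]
  calc |R| ^ k / Gamma (α * k + β) ≤ |R| ^ k / (Q ^ k * T ^ (β - 1) * exp (-T)) := by
        gcongr
    _ = (|R| / Q) ^ k * (T ^ (1 - β) * exp T) := by
        rw [div_pow, rpow_sub hT, rpow_sub hT, rpow_one, exp_neg]
        field_simp
    _ ≤ (1 / 2) ^ k * (T ^ (1 - β) * exp T) := by
        have hRQ : |R| / Q ≤ 1 / 2 := by rw [div_le_iff₀ hQ]; linarith [abs_nonneg R]
        exact mul_le_mul_of_nonneg_right (pow_le_pow_left₀ (by positivity) hRQ k) (by positivity)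
    _ = T ^ (1 - β) * exp T * (1 / 2) ^ k := by ring

end Real

open Complex

namespace Complex

lemma norm_sin_le_exp_abs_im (z : ℂ) : ‖sin z‖ ≤ Real.exp |z.im| := by
  have h₁ : ‖exp (-z * I)‖ ≤ Real.exp |z.im| := by
    rw [norm_exp]; simpa using le_abs_self z.im
  have h₂ : ‖exp (z * I)‖ ≤ Real.exp |z.im| := by
    rw [norm_exp]; simpa using neg_le_abs z.im
  calc ‖sin z‖ = ‖exp (-z * I) - exp (z * I)‖ / 2 := by simp [sin]
    _ ≤ (‖exp (-z * I)‖ + ‖exp (z * I)‖) / 2 := by gcongr; exact norm_sub_le _ _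
    _ ≤ Real.exp |z.im| := by linarith

lemma norm_Gamma_le_Gamma_re {s : ℂ} (hs : 0 < s.re) : ‖Gamma s‖ ≤ Real.Gamma s.re := by
  rw [Gamma_eq_integral hs, Real.Gamma_eq_integral hs, GammaIntegral]
  refine MeasureTheory.norm_integral_le_of_norm_le (Real.GammaIntegral_convergent hs) ?_
  filter_upwards [MeasureTheory.ae_restrict_mem measurableSet_Ioi] with x hx
  rw [norm_mul, norm_cpow_eq_rpow_re_of_pos hx, norm_real, Real.norm_of_nonneg (Real.exp_pos _).le]
  simp

lemma inv_Gamma_eq_sin_mul_Gamma_one_sub {w : ℂ} (hw : ∀ n : ℕ, w ≠ n + 1) :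
    (Gamma w)⁻¹ = sin (π * w) / π * Gamma (1 - w) := by
  have hΓ : Gamma (1 - w) ≠ 0 := Gamma_ne_zero fun m h => hw m (by linear_combination -h)
  have h := congrArg (· * Gamma (1 - w)) (congrArg Inv.inv (Gamma_mul_Gamma_one_sub w))
  simp only [mul_inv, inv_div] at h
  rwa [inv_mul_cancel_right₀ hΓ] at h

lemma Gamma_one_sub_eq_Gamma_two_sub_div {w : ℂ} (hw : w ≠ 1) :
    Gamma (1 - w) = Gamma (2 - w) / (1 - w) := by
  have h : 1 - w ≠ 0 := sub_ne_zero.2 hw.symm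
  rw [show (2 : ℂ) - w = 1 - w + 1 by ring, Gamma_add_one _ h, mul_div_cancel_left₀ _ h]

lemma exists_norm_inv_Gamma_le_of_re_mem_Icc :
    ∃ C, ∀ w : ℂ, w.re ∈ Icc (1 / 2 : ℝ) (3 / 2) →
      ‖(Gamma w)⁻¹‖ ≤ C * Real.exp (π * |w.im|) := by
  obtain ⟨C₀, hC₀⟩ := (isCompact_closedBall (1 : ℂ) (1 / 2)).exists_bound_of_continuousOn
    differentiable_one_div_Gamma.continuous.continuousOn
  refine ⟨max C₀ (2 * √π / π), fun w hw => ?_⟩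
  have hexp : 1 ≤ Real.exp (π * |w.im|) := Real.one_le_exp (by positivity)
  rcases le_or_gt (dist w 1) (1 / 2) with hnear | hfar
  · calc ‖(Gamma w)⁻¹‖ ≤ C₀ := hC₀ w hnear
      _ ≤ max C₀ (2 * √π / π) * 1 := by simp
      _ ≤ _ := by gcongr
  -- away from `w = 1`, where `Γ (1 - w)` has its pole, the reflection formula applies
  have hw1 : w ≠ 1 := by rintro rfl; norm_num at hfar
  have hnat : ∀ n : ℕ, w ≠ n + 1 := by
    rintro (_ | n) rfl
    · simp at hw1
    · have := hw.2; simp at this; linarith [n.cast_nonneg (α := ℝ)]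
  have hsin : ‖sin (π * w)‖ ≤ Real.exp (π * |w.im|) := by
    simpa [abs_mul, abs_of_pos Real.pi_pos] using norm_sin_le_exp_abs_im (π * w)
  have hΓ : ‖Gamma (2 - w)‖ ≤ √π := by
    refine (norm_Gamma_le_Gamma_re (by simp; linarith [hw.2])).trans
      (Real.Gamma_le_sqrt_pi_of_mem_Icc ?_)
    simp only [sub_re, mem_Icc]; norm_num; constructor <;> linarith [hw.1, hw.2]
  have hdist : 1 / 2 ≤ ‖1 - w‖ := by rw [norm_sub_rev, ← dist_eq_norm]; exact hfar.le
  rw [inv_Gamma_eq_sin_mul_Gamma_one_sub hnat, Gamma_one_sub_eq_Gamma_two_sub_div hw1]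
  calc ‖sin (π * w) / π * (Gamma (2 - w) / (1 - w))‖
      = ‖sin (π * w)‖ * ‖Gamma (2 - w)‖ / (π * ‖1 - w‖) := by
        simp [abs_of_pos Real.pi_pos]; ring
    _ ≤ Real.exp (π * |w.im|) * √π / (π * (1 / 2)) := by gcongr
    _ = 2 * √π / π * Real.exp (π * |w.im|) := by ring
    _ ≤ _ := by gcongr; exact le_max_right _ _

lemma norm_inv_Gamma_add_one_mul_Gamma_re_le {s : ℂ} (hs : 0 < s.re) :
    ‖(Gamma (s + 1))⁻¹‖ * Real.Gamma (s.re + 1) ≤ ‖(Gamma s)⁻¹‖ * Real.Gamma s.re := by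
  have hs0 : s ≠ 0 := fun h => by simp [h] at hs
  have hΓ : 0 ≤ Real.Gamma s.re := (Real.Gamma_pos_of_pos hs).le
  rw [one_div_Gamma_eq_self_mul_one_div_Gamma_add_one s, norm_mul, Real.Gamma_add_one hs.ne']
  calc ‖(Gamma (s + 1))⁻¹‖ * (s.re * Real.Gamma s.re)
      ≤ ‖(Gamma (s + 1))⁻¹‖ * (‖s‖ * Real.Gamma s.re) := by
        gcongr; exact re_le_norm s
    _ = ‖s‖ * ‖(Gamma (s + 1))⁻¹‖ * Real.Gamma s.re := by ring

lemma norm_inv_Gamma_add_nat_mul_Gamma_re_le {s : ℂ} (hs : 0 < s.re) (n : ℕ) :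
    ‖(Gamma (s + n))⁻¹‖ * Real.Gamma (s.re + n) ≤ ‖(Gamma s)⁻¹‖ * Real.Gamma s.re := by
  induction n with
  | zero => simp
  | succ n ih =>
    have h := norm_inv_Gamma_add_one_mul_Gamma_re_le (s := s + n) (by simp; positivity)
    simp only [add_re, natCast_re] at h
    push_cast
    rw [← add_assoc, ← add_assoc]
    exact h.trans ih

lemma exists_norm_inv_Gamma_mul_Gamma_re_le :
    ∃ C, ∀ s : ℂ, 1 / 2 ≤ s.re →
      ‖(Gamma s)⁻¹‖ * Real.Gamma s.re ≤ C * Real.exp (π * |s.im|) := by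
  obtain ⟨C, hC⟩ := exists_norm_inv_Gamma_le_of_re_mem_Icc
  refine ⟨C * √π, fun s hs => ?_⟩
  set n := ⌊s.re - 1 / 2⌋₊
  set w := s - n
  have hwre : w.re ∈ Icc (1 / 2 : ℝ) (3 / 2) := by
    have h₁ := Nat.floor_le (a := s.re - 1 / 2) (by linarith)
    have h₂ := Nat.lt_floor_add_one (s.re - 1 / 2)
    simp only [w, sub_re, natCast_re, mem_Icc]
    constructor <;> linarith
  have hw : s = w + n := by simp [w]
  have hsre : s.re = w.re + n := by simp [w]
  have hsim : s.im = w.im := by simp [w]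
  calc ‖(Gamma s)⁻¹‖ * Real.Gamma s.re
      ≤ ‖(Gamma w)⁻¹‖ * Real.Gamma w.re := by
        rw [hsre, hw]; exact norm_inv_Gamma_add_nat_mul_Gamma_re_le (by linarith [hwre.1]) n
    _ ≤ C * Real.exp (π * |s.im|) * √π := by
        rw [hsim]
        exact mul_le_mul (hC w hwre) (Real.Gamma_le_sqrt_pi_of_mem_Icc hwre)
          (Real.Gamma_pos_of_pos (by linarith [hwre.1])).le ((norm_nonneg _).trans (hC w hwre))
    _ = C * √π * Real.exp (π * |s.im|) := by ring

end Complex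

lemma tendsto_norm_inv_Gamma_add_mul_mul_pow_atTop {a : ℂ} (ha : 0 < a.re) (b : ℂ) (r : ℝ) :
    Tendsto (fun k : ℕ => ‖(Gamma (b + a * k))⁻¹‖ * r ^ k) atTop (𝓝 0) := by
  obtain ⟨C, hC⟩ := exists_norm_inv_Gamma_mul_Gamma_re_le
  set R := r * Real.exp (π * |a.im|)
  have hlim := (Real.tendsto_pow_div_Gamma_mul_add_atTop R b.re ha).norm.const_mul
    (C * Real.exp (π * |b.im|))
  rw [norm_zero, mul_zero] at hlim
  have hlarge : ∀ᶠ k : ℕ in atTop, 1 / 2 ≤ (b + a * k).re := by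
    obtain ⟨k₀, hk₀⟩ := exists_nat_ge ((1 / 2 - b.re) / a.re)
    filter_upwards [eventually_ge_atTop k₀] with k hk
    have : (1 / 2 - b.re) / a.re ≤ k := hk₀.trans (by exact_mod_cast hk)
    rw [div_le_iff₀ ha] at this
    simp only [add_re, mul_re, natCast_re, natCast_im]
    linarith
  have hC0 : 0 ≤ C := zero_le_one.trans (by simpa using hC 1 (by norm_num))
  refine squeeze_zero_norm' ?_ hlim
  filter_upwards [hlarge] with k hk
  have hre : (b + a * k).re = a.re * k + b.re := by simp; ring
  have him : |(b + a * k).im| ≤ |b.im| + k * |a.im| := by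
    simpa [abs_mul, mul_comm] using abs_add_le b.im (a.im * k)
  have hΓ : 0 < Real.Gamma (a.re * k + b.re) := Real.Gamma_pos_of_pos (by linarith)
  have hexp : Real.exp (π * |(b + a * k).im|) ≤
      Real.exp (π * |b.im|) * Real.exp (π * |a.im|) ^ k := by
    rw [← Real.exp_nat_mul, ← Real.exp_add]
    gcongr
    nlinarith [Real.pi_pos]
  have hbound := hC _ hk
  rw [hre, ← le_div_iff₀ hΓ] at hbound
  rw [norm_mul, norm_norm, norm_pow, Real.norm_eq_abs]
  calc ‖(Gamma (b + a * k))⁻¹‖ * |r| ^ k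
      ≤ C * Real.exp (π * |(b + a * k).im|) / Real.Gamma (a.re * k + b.re) * |r| ^ k := by
        gcongr
    _ ≤ C * (Real.exp (π * |b.im|) * Real.exp (π * |a.im|) ^ k) /
          Real.Gamma (a.re * k + b.re) * |r| ^ k := by
        gcongr
    _ = C * Real.exp (π * |b.im|) * ‖R ^ k / Real.Gamma (a.re * k + b.re)‖ := by
        rw [norm_div, norm_pow, Real.norm_of_nonneg hΓ.le, Real.norm_eq_abs, abs_mul,
          abs_of_pos (Real.exp_pos _), mul_pow]
        ring

noncomputable def mittagLefflerSeries (a b : ℂ) : FormalMultilinearSeries ℂ ℂ ℂ :=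
  .ofScalars ℂ fun k : ℕ => (Gamma (b + a * k))⁻¹

lemma mittagLefflerSeries_radius {a : ℂ} (ha : 0 < a.re) (b : ℂ) :
    (mittagLefflerSeries a b).radius = ⊤ :=
  ENNReal.eq_top_of_forall_nnreal_le fun r =>
    (mittagLefflerSeries a b).le_radius_of_tendsto (l := 0) <| by
      simpa [mittagLefflerSeries] using tendsto_norm_inv_Gamma_add_mul_mul_pow_atTop ha b r

lemma mittagLeffler_eq_sum (a b : ℂ) : mittagLeffler a b = (mittagLefflerSeries a b).sum := by
  funext z
  rw [mittagLeffler, mittagLefflerSeries, ← FormalMultilinearSeries.ofScalarsSum,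
    FormalMultilinearSeries.ofScalars_sum_eq]
  exact tsum_congr fun k => by rw [smul_eq_mul, div_eq_inv_mul]

/-- For `Re a > 0` and any `b`, the Mittag-Leffler series converges absolutely for every
`z ∈ ℂ`, and `E_{a,b}` is an entire function. -/
theorem mittagLeffler_summable_and_entire (a b : ℂ) (ha : 0 < a.re) :
    (∀ z : ℂ, Summable fun k : ℕ => ‖z ^ k / Complex.Gamma (b + a * k)‖) ∧
    (∀ z : ℂ, AnalyticAt ℂ (mittagLeffler a b) z) := by
  have hrad := mittagLefflerSeries_radius ha b
  refine ⟨fun z => ?_, fun z => ?_⟩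
  · have h := (mittagLefflerSeries a b).summable_norm_mul_pow (r := ‖z‖₊) (by simp [hrad])
    simpa [mittagLefflerSeries, div_eq_inv_mul, mul_comm] using h
  · rw [mittagLeffler_eq_sum]
    exact ((mittagLefflerSeries a b).hasFPowerSeriesOnBall (by simp [hrad])).analyticAt_of_mem
      (by simp [hrad])
end

section
/- Differentiation rule: for every complex number a with Re(a) > 0, every complex number b, and every z ∈ ℂ, one has a · z · (d/dz E_{a,b})(z) = E_{a,b−1}(z) − (b − 1) · E_{a,b}(z), where d/dz E_{a,b} denotes the complex derivative of the entire function z ↦ E_{a,b}(z). -/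
/-!
The series may be differentiated termwise because its radius of convergence is infinite. By the
ratio test this amounts to `Γ(s) / Γ(s + a) → 0` as `re s → ∞`, which follows from
`Γ(s) Γ(a) = Γ(s + a) B(s, a)` and dominated convergence in the Beta integral. Termwise, the
identity is the functional equation `1 / Γ(s - 1) = (s - 1) / Γ(s)` at `s = b + a k`.
-/

open Filter Topology MeasureTheory
open scoped Interval

theorem summable_norm_mul_pow_of_tendsto_ratio_zero {𝕜 : Type*} [NontriviallyNormedField 𝕜]
    {c : ℕ → 𝕜} (hc : ∀ᶠ n in atTop, c n ≠ 0)
    (hc' : Tendsto (fun n ↦ ‖c (n + 1)‖ / ‖c n‖) atTop (𝓝 0)) (r : ℝ) :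
    Summable fun n => ‖c n‖ * r ^ n := by
  have hrad := FormalMultilinearSeries.ofScalars_radius_eq_top_of_tendsto 𝕜 c hc hc'
  have h := (FormalMultilinearSeries.ofScalars 𝕜 c).summable_norm_mul_pow
    (r := ‖r‖₊) (by simp [hrad])
  refine Summable.of_norm_bounded (by simpa using h) fun n => ?_
  simp

theorem natCast_mul_pow_sub_one_le {x R : ℝ} (hx : 0 ≤ x) (hxR : x ≤ R) (hR : 1 ≤ R) (k : ℕ) :
    k * x ^ (k - 1) ≤ (2 * R) ^ k := by
  rw [mul_pow]
  gcongr
  · exact_mod_cast (Nat.lt_two_pow_self).le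
  · exact (pow_le_pow_left₀ hx hxR _).trans (pow_le_pow_right₀ hR (Nat.sub_le k 1))

theorem hasDerivAt_tsum_mul_pow {𝕜 : Type*} [RCLike 𝕜] {c : ℕ → 𝕜}
    (hc : ∀ r : ℝ, Summable fun k => ‖c k‖ * r ^ k) (z : 𝕜) :
    HasDerivAt (fun w => ∑' k, c k * w ^ k) (∑' k, c k * (k * z ^ (k - 1))) z := by
  set R := ‖z‖ + 1
  have hz : z ∈ Metric.ball (0 : 𝕜) R := by simp [R]
  refine hasDerivAt_tsum_of_isPreconnected (hc (2 * R)) Metric.isOpen_ball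
    (convex_ball 0 R).isPreconnected (fun k w _ => (hasDerivAt_pow k w).const_mul (c k))
    (fun k w hw => ?_) hz ?_ hz
  · rw [norm_mul, norm_mul, norm_pow, RCLike.norm_natCast]
    gcongr
    exact natCast_mul_pow_sub_one_le (norm_nonneg w) (by simpa using (mem_ball_zero_iff.1 hw).le)
      (by simp [R]) k
  · exact Summable.of_norm_bounded (hc ‖z‖) fun k => by rw [norm_mul, norm_pow]

namespace Complex

theorem tendsto_betaIntegral_comap_re_atTop {v : ℂ} (hv : 0 < v.re) :
    Tendsto (fun u => betaIntegral u v) (comap re atTop) (𝓝 0) := by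
  have hre : Tendsto re (comap re atTop) atTop := tendsto_comap
  have hnorm (u : ℂ) {x : ℝ} (hx : x ∈ Set.Ioo 0 1) :
      ‖(x : ℂ) ^ (u - 1) * (1 - (x : ℂ)) ^ (v - 1)‖ = x ^ (u.re - 1) * (1 - x) ^ (v.re - 1) := by
    rw [norm_mul, ← ofReal_one, ← ofReal_sub, norm_cpow_eq_rpow_re_of_pos hx.1,
      norm_cpow_eq_rpow_re_of_pos (sub_pos.2 hx.2)]
    simp
  have hIoo : ∀ᵐ x : ℝ, x ∈ Ι (0 : ℝ) 1 → x ∈ Set.Ioo (0 : ℝ) 1 := by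
    filter_upwards [Measure.ae_ne volume 1] with x hx1 hx
    rw [Set.uIoc_of_le zero_le_one] at hx
    exact ⟨hx.1, hx.2.lt_of_ne hx1⟩
  have hmeas : ∀ᶠ u in comap re atTop, AEStronglyMeasurable
      (fun x : ℝ => (x : ℂ) ^ (u - 1) * (1 - (x : ℂ)) ^ (v - 1)) (volume.restrict (Ι 0 1)) :=
    (hre.eventually_gt_atTop 0).mono fun u hu =>
      (betaIntegral_convergent hu hv).def'.aestronglyMeasurable
  have hdom : ∀ᶠ u in comap re atTop, ∀ᵐ x : ℝ, x ∈ Ι (0 : ℝ) 1 →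
      ‖(x : ℂ) ^ (u - 1) * (1 - (x : ℂ)) ^ (v - 1)‖ ≤ (1 - x) ^ (v.re - 1) := by
    filter_upwards [hre.eventually_ge_atTop 1] with u hu
    filter_upwards [hIoo] with x hx hxI
    obtain ⟨hx0, hx1⟩ := hx hxI
    rw [hnorm u ⟨hx0, hx1⟩]
    exact mul_le_of_le_one_left (Real.rpow_nonneg (sub_nonneg.2 hx1.le) _)
      (Real.rpow_le_one hx0.le hx1.le (by linarith))
  have hint : IntervalIntegrable (fun x : ℝ => (1 - x) ^ (v.re - 1)) volume 0 1 := by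
    simpa using (intervalIntegral.intervalIntegrable_rpow' (r := v.re - 1) (by linarith)
      (a := 1) (b := 0)).comp_sub_left 1
  have hlim : ∀ᵐ x : ℝ, x ∈ Ι (0 : ℝ) 1 →
      Tendsto (fun u => (x : ℂ) ^ (u - 1) * (1 - (x : ℂ)) ^ (v - 1)) (comap re atTop) (𝓝 0) := by
    filter_upwards [hIoo] with x hx hxI
    obtain ⟨hx0, hx1⟩ := hx hxI
    rw [tendsto_zero_iff_norm_tendsto_zero]
    simp_rw [hnorm _ ⟨hx0, hx1⟩]
    simpa [sub_eq_add_neg] using ((tendsto_rpow_atTop_of_base_lt_one x (by linarith) hx1).comp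
      (tendsto_atTop_add_const_right _ (-1) hre)).mul_const ((1 - x) ^ (v.re - 1))
  simpa [betaIntegral] using
    intervalIntegral.tendsto_integral_filter_of_dominated_convergence _ hmeas hdom hint hlim

theorem tendsto_Gamma_div_Gamma_add_comap_re_atTop {v : ℂ} (hv : 0 < v.re) :
    Tendsto (fun u => Gamma u / Gamma (u + v)) (comap re atTop) (𝓝 0) := by
  have hre : Tendsto re (comap re atTop) atTop := tendsto_comap
  have hB : ∀ᶠ u in comap re atTop, betaIntegral u v / Gamma v = Gamma u / Gamma (u + v) := by
    filter_upwards [hre.eventually_gt_atTop 0] with u hu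
    have hΓ : Gamma (u + v) ≠ 0 := Gamma_ne_zero_of_re_pos (by simp; linarith)
    rw [div_eq_div_iff (Gamma_ne_zero_of_re_pos hv) hΓ, Gamma_mul_Gamma_eq_betaIntegral hu hv]
    ring
  simpa using ((tendsto_betaIntegral_comap_re_atTop hv).div_const (Gamma v)).congr' hB


theorem Gamma_inv_sub_one (s : ℂ) : (Gamma (s - 1))⁻¹ = (s - 1) * (Gamma s)⁻¹ := by
  simpa using one_div_Gamma_eq_self_mul_one_div_Gamma_add_one (s - 1)

end Complex

open Complex

theorem tendsto_comap_re_add_mul_natCast {a : ℂ} (ha : 0 < a.re) (b : ℂ) :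
    Tendsto (fun k : ℕ => b + a * k) atTop (comap re atTop) := by
  refine tendsto_comap_iff.2 ?_
  simpa [Function.comp_def] using tendsto_atTop_add_const_left _ b.re
    ((tendsto_natCast_atTop_atTop (R := ℝ)).const_mul_atTop ha)

theorem summable_norm_Gamma_inv_mul_pow {a : ℂ} (ha : 0 < a.re) (b : ℂ) (r : ℝ) :
    Summable fun k : ℕ => ‖(Gamma (b + a * k))⁻¹‖ * r ^ k := by
  have hs := tendsto_comap_re_add_mul_natCast ha b
  refine summable_norm_mul_pow_of_tendsto_ratio_zero ?_ ?_ r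
  · filter_upwards [hs.eventually (tendsto_comap.eventually_gt_atTop 0)] with k hk
    exact inv_ne_zero (Gamma_ne_zero_of_re_pos hk)
  · have h := ((tendsto_Gamma_div_Gamma_add_comap_re_atTop ha).comp hs).norm
    rw [norm_zero] at h
    refine h.congr fun k => ?_
    rw [Function.comp_apply, norm_div, norm_inv, norm_inv, inv_div_inv]
    push_cast
    ring_nf

theorem summable_mittagLeffler {a : ℂ} (ha : 0 < a.re) (b z : ℂ) :
    Summable fun k : ℕ => z ^ k / Gamma (b + a * k) :=
  .of_norm_bounded (summable_norm_Gamma_inv_mul_pow ha b ‖z‖) fun k => by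
    rw [div_eq_inv_mul, norm_mul, norm_pow]

theorem hasDerivAt_mittagLeffler {a : ℂ} (ha : 0 < a.re) (b z : ℂ) :
    HasDerivAt (mittagLeffler a b) (∑' k : ℕ, k * z ^ (k - 1) / Gamma (b + a * k)) z := by
  have h := hasDerivAt_tsum_mul_pow (summable_norm_Gamma_inv_mul_pow ha b) z
  simp only [← div_eq_inv_mul] at h
  exact h

/-- Differentiation rule: `a z E_{a,b}'(z) = E_{a,b−1}(z) − (b−1) E_{a,b}(z)`. -/
theorem mittagLeffler_deriv (a b : ℂ) (ha : 0 < a.re) (z : ℂ) :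
    a * z * deriv (mittagLeffler a b) z
      = mittagLeffler a (b - 1) z - (b - 1) * mittagLeffler a b z := by
  have hterm (k : ℕ) : a * z * (k * z ^ (k - 1) / Gamma (b + a * k))
      = z ^ k / Gamma (b - 1 + a * k) - (b - 1) * (z ^ k / Gamma (b + a * k)) := by
    rw [show b - 1 + a * k = b + a * k - 1 by ring, div_eq_mul_inv _ (Gamma (_ - 1)),
      Gamma_inv_sub_one]
    rcases k with _ | k
    · simp
    · push_cast
      rw [pow_succ]
      ring
  rw [(hasDerivAt_mittagLeffler ha b z).deriv, mittagLeffler, mittagLeffler, ← tsum_mul_left,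
    ← tsum_mul_left, ← (summable_mittagLeffler ha _ z).tsum_sub
      ((summable_mittagLeffler ha b z).mul_left _)]
  exact tsum_congr hterm
end

section
/- Iterated differentiation recursion: let a > 0 and b, x be real numbers and m a natural number. Then for every real z > 0, the m-th derivative of the function z ↦ z^{b−1} · E_{a,b}(x · z^a) (a real function of the real variable z > 0) satisfies (d^m/dz^m){ z^{b−1} · E_{a,b}(x · z^a) } = z^{b−1−m} · E_{a,b−m}(x · z^a). -/
/-!
Expanding the Mittag-Leffler function, `t ^ (c - 1) * E_{a,c}(x t ^ a)` is the series
`∑ₖ xᵏ t ^ (c - 1 + a k) / Γ(c + a k)`. Differentiating term by term and using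
`s / Γ(s + 1) = 1 / Γ(s)` turns it into `t ^ (c - 2) * E_{a,c-1}(x t ^ a)`, and induction on `m`
gives the iterated formula. Term-by-term differentiation is justified by locally uniform domination:
since `M ^ s ≤ C_M Γ(s)` for every `M`, the terms of `∑ₖ yᵏ / Γ(b + a k)` are eventually
dominated by a geometric series.
-/

open Real Set Filter Topology

/-- The (real) Mittag-Leffler function `E_{a,b}(x) = ∑_{k=0}^∞ x^k / Γ(b + a k)` for real
parameters and real argument. -/
noncomputable def mittagLefflerReal (a b x : ℝ) : ℝ :=
  ∑' k : ℕ, x ^ k / Real.Gamma (b + a * k)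

namespace Real

lemma rpow_le_mul_Gamma {M s : ℝ} (hM : 1 ≤ M) (hs : 2 ≤ s) :
    M ^ s ≤ M ^ 2 * exp M * Gamma s := by
  have hfloor : 2 ≤ ⌊s⌋₊ := Nat.le_floor (by exact_mod_cast hs)
  obtain ⟨j, hj⟩ : ∃ j : ℕ, ⌊s⌋₊ = j + 1 := ⟨⌊s⌋₊ - 1, by omega⟩
  have hj₁ : (1 : ℝ) ≤ j := by exact_mod_cast (by omega : 1 ≤ j)
  have hjs : (j : ℝ) + 1 ≤ s := by exact_mod_cast hj ▸ Nat.floor_le (by linarith)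
  have hsj : s ≤ (j : ℝ) + 2 := by
    have := Nat.lt_floor_add_one s
    rw [hj] at this
    push_cast at this
    linarith
  calc M ^ s ≤ M ^ ((j : ℝ) + 2) := rpow_le_rpow_of_exponent_le hM hsj
    _ = M ^ 2 * M ^ j := by rw [rpow_add (by linarith), rpow_natCast, rpow_two, mul_comm]
    _ ≤ M ^ 2 * (exp M * j.factorial) := by
      gcongr
      rw [← div_le_iff₀ (by positivity)]
      exact pow_div_factorial_le_exp M (by linarith) j
    _ = M ^ 2 * exp M * Gamma (j + 1) := by rw [Gamma_nat_eq_factorial]; ring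
    _ ≤ M ^ 2 * exp M * Gamma s := by
      gcongr
      exact Gamma_strictMonoOn_Ici.monotoneOn (mem_Ici.2 (by linarith)) (mem_Ici.2 hs) hjs

lemma self_div_Gamma_add_one (s : ℝ) : s / Gamma (s + 1) = (Gamma s)⁻¹ := by
  rcases eq_or_ne s 0 with rfl | hs
  · simp
  · rw [Gamma_add_one hs, div_mul_eq_div_div, div_self hs, one_div]

lemma rpow_mul_rpow_pow {t : ℝ} (ht : 0 < t) (p a : ℝ) (k : ℕ) :
    t ^ p * (t ^ a) ^ k = t ^ (p + a * k) := by
  rw [rpow_add ht, rpow_mul ht.le, rpow_natCast]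

end Real

lemma summable_norm_pow_div_Gamma {a : ℝ} (ha : 0 < a) (b y : ℝ) :
    Summable fun k : ℕ => ‖y ^ k / Gamma (b + a * k)‖ := by
  set M := (|y| + 1) ^ a⁻¹
  have hy : 0 < |y| + 1 := by positivity
  have hM : 1 ≤ M := one_le_rpow (by linarith [abs_nonneg y]) (inv_nonneg.2 ha.le)
  have hM₀ : 0 < M := by linarith
  have hMa : M ^ a = |y| + 1 := by rw [← rpow_mul hy.le, inv_mul_cancel₀ ha.ne', rpow_one]
  have hgeom : Summable fun k : ℕ => (|y| / (|y| + 1)) ^ k :=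
    summable_geometric_of_lt_one (by positivity) ((div_lt_one hy).2 (by linarith))
  refine .of_norm_bounded_eventually_nat (hgeom.mul_left (M ^ 2 * exp M * M ^ (-b))) ?_
  have hlarge : ∀ᶠ k : ℕ in atTop, 2 ≤ b + a * k :=
    (tendsto_atTop_add_const_left _ b
      (tendsto_natCast_atTop_atTop.const_mul_atTop ha)).eventually_ge_atTop 2
  filter_upwards [hlarge] with k hk
  have hΓ : 0 < Gamma (b + a * k) := Gamma_pos_of_pos (by linarith)
  rw [norm_norm, norm_div, norm_pow, norm_eq_abs, norm_of_nonneg hΓ.le, div_le_iff₀ hΓ]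
  calc |y| ^ k = (|y| / (|y| + 1)) ^ k * (M ^ (-b) * M ^ (b + a * k)) := by
        rw [← rpow_add hM₀, neg_add_cancel_left, rpow_mul hM₀.le, hMa, rpow_natCast, ← mul_pow,
          div_mul_cancel₀ _ hy.ne']
    _ ≤ (|y| / (|y| + 1)) ^ k * (M ^ (-b) * (M ^ 2 * exp M * Gamma (b + a * k))) := by
        gcongr
        exact rpow_le_mul_Gamma hM hk
    _ = _ := by ring

lemma hasDerivAt_rpow_mul_pow_div_Gamma (a c x : ℝ) (k : ℕ) {t : ℝ} (ht : 0 < t) :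
    HasDerivAt (fun s => s ^ (c - 1) * ((x * s ^ a) ^ k / Gamma (c + a * k)))
      (t ^ (c - 2) * ((x * t ^ a) ^ k / Gamma (c - 1 + a * k))) t := by
  set p := c - 1 + a * k
  have hp : c + a * k = p + 1 := by ring
  have hterm : ∀ s, 0 < s →
      s ^ (c - 1) * ((x * s ^ a) ^ k / Gamma (c + a * k)) = x ^ k / Gamma (p + 1) * s ^ p := by
    intro s hs
    rw [← rpow_mul_rpow_pow hs, hp]
    ring
  have h := ((hasDerivAt_rpow_const (p := p) (Or.inl ht.ne')).const_mul
    (x ^ k / Gamma (p + 1))).congr_of_eventuallyEq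
    (eventually_of_mem (Ioi_mem_nhds ht) hterm)
  refine h.congr_deriv ?_
  rw [show p - 1 = c - 2 + a * k by ring, ← rpow_mul_rpow_pow ht, div_eq_mul_inv _ (Gamma p),
    ← self_div_Gamma_add_one p]
  ring

theorem hasDerivAt_rpow_mul_mittagLefflerReal {a : ℝ} (ha : 0 < a) (c x : ℝ) {z : ℝ}
    (hz : 0 < z) :
    HasDerivAt (fun t => t ^ (c - 1) * mittagLefflerReal a c (x * t ^ a))
      (z ^ (c - 2) * mittagLefflerReal a (c - 1) (x * z ^ a)) z := by
  set U := Ioo (z / 2) (2 * z)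
  have hzU : z ∈ U := ⟨by linarith, by linarith⟩
  have hU : ∀ t ∈ U, 0 < t := fun t ht => by linarith [ht.1]
  have hcont : ContinuousOn (fun t : ℝ => t ^ (c - 2)) (Icc (z / 2) (2 * z)) := fun t ht =>
    (continuousAt_rpow_const t (c - 2) (Or.inl (by linarith [ht.1] : 0 < t).ne')).continuousWithinAt
  obtain ⟨B, hB⟩ := isCompact_Icc.exists_bound_of_continuousOn hcont
  have hbound : ∀ (k : ℕ), ∀ t ∈ U,
      ‖t ^ (c - 2) * ((x * t ^ a) ^ k / Gamma (c - 1 + a * k))‖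
        ≤ B * ‖(x * (2 * z) ^ a) ^ k / Gamma (c - 1 + a * k)‖ := by
    intro k t ht
    have hBt := hB t (Ioo_subset_Icc_self ht)
    rw [norm_mul]
    refine mul_le_mul hBt ?_ (norm_nonneg _) ((norm_nonneg _).trans hBt)
    simp only [norm_div, norm_pow, norm_mul]
    gcongr
    rw [norm_of_nonneg (rpow_nonneg (hU t ht).le _), norm_of_nonneg (by positivity)]
    exact rpow_le_rpow (hU t ht).le ht.2.le ha.le
  have H := hasDerivAt_tsum_of_isPreconnected
    ((summable_norm_pow_div_Gamma ha (c - 1) (x * (2 * z) ^ a)).mul_left B)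
    isOpen_Ioo isPreconnected_Ioo
    (fun k t ht => hasDerivAt_rpow_mul_pow_div_Gamma a c x k (hU t ht)) hbound hzU
    ((summable_norm_pow_div_Gamma ha c (x * z ^ a)).of_norm.mul_left (z ^ (c - 1))) hzU
  simpa only [tsum_mul_left, mittagLefflerReal] using H

/-- Iterated differentiation recursion: for `a > 0`, real `b, x` and `z > 0`,
`(d^m/dz^m) { z^{b−1} E_{a,b}(x z^a) } = z^{b−1−m} E_{a,b−m}(x z^a)`,
the derivatives being taken within `(0, ∞)`. -/
theorem mittagLeffler_iteratedDeriv (a b x : ℝ) (ha : 0 < a) (m : ℕ) (z : ℝ) (hz : 0 < z) :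
    iteratedDerivWithin m
        (fun t : ℝ => t ^ (b - 1) * mittagLefflerReal a b (x * t ^ a)) (Set.Ioi 0) z
      = z ^ (b - 1 - m) * mittagLefflerReal a (b - m) (x * z ^ a) := by
  induction m generalizing z with
  | zero => simp
  | succ m ih =>
    have hlocal : iteratedDerivWithin m
        (fun t : ℝ => t ^ (b - 1) * mittagLefflerReal a b (x * t ^ a)) (Ioi 0)
        =ᶠ[𝓝 z] fun t => t ^ (b - m - 1) * mittagLefflerReal a (b - m) (x * t ^ a) := by
      filter_upwards [Ioi_mem_nhds hz] with t ht
      rw [ih t ht, sub_right_comm]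
    rw [iteratedDerivWithin_succ, derivWithin_of_isOpen isOpen_Ioi hz, hlocal.deriv_eq,
      (hasDerivAt_rpow_mul_mittagLefflerReal ha (b - m) x hz).deriv]
    push_cast
    ring_nf
end

section
/- Wiman-type closed form for rational parameter 1/n: let n be a positive integer and x > 0 a real number. (i) If b > 1 is real, then E_{1/n, b}(x) = x^{(1−b)·n} · e^{x^n} · ∑_{j=0}^{n−1} (1/Γ(b − 1 + j/n)) · ∫_0^{x^n}ت t^{(b−1+j/n)−1} e^{−t} dt. (ii) For b = 1, E_{1/n}(x) = e^{x^n} · ( 1 + ∫_0^{x^n} e^{−t} · ∑_{j=1}^{n−1} t^{j/n − 1} / Γ(j/n) dt ). -/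
/-!
Split the series `E_{1/n,b}(x) = ∑ₖ xᵏ / Γ(b + k/n)` according to the residue `j` of `k` modulo
`n`. With `s = b - 1 + j/n`, `y = xⁿ` and the lower incomplete gamma function
`γ(s,y) = ∫₀ʸ t^{s-1} e^{-t} dt`, the terms with `k = mn + j` are
`x^{(1-b)n} y^{s+m} / Γ(s+m+1)`, and `∑ₘ y^{s+m} / Γ(s+m+1) = eʸ γ(s,y) / Γ(s)`: integration by
parts gives `γ(s,y)/Γ(s) = e^{-y} y^s/Γ(s+1) + γ(s+1,y)/Γ(s+1)`, and after `M` steps the remainder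
`γ(s+M,y)/Γ(s+M) ≤ y^{s+M}/Γ(s+M+1)` tends to zero. For `b = 1` the residue `j = 0` has `s = 0`
and gives the exponential series of `y` instead.
-/

open intervalIntegral

open Real Filter Topology Finset

noncomputable def lowerGamma (s y : ℝ) : ℝ :=
  ∫ t in (0:ℝ)..y, t ^ (s - 1) * exp (-t)

section LowerGamma

variable {s y : ℝ}

theorem intervalIntegrable_rpow_sub_one_mul_exp_neg (hs : 0 < s) :
    IntervalIntegrable (fun t : ℝ => t ^ (s - 1) * exp (-t)) MeasureTheory.volume 0 y :=
  (intervalIntegrable_rpow' (by linarith)).mul_continuousOn (by fun_prop)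

theorem lowerGamma_nonneg (hy : 0 ≤ y) : 0 ≤ lowerGamma s y :=
  integral_nonneg hy fun _ ht => mul_nonneg (rpow_nonneg ht.1 _) (exp_pos _).le

theorem lowerGamma_le_rpow_div (hs : 0 < s) (hy : 0 ≤ y) : lowerGamma s y ≤ y ^ s / s := by
  calc lowerGamma s y ≤ ∫ t in (0:ℝ)..y, t ^ (s - 1) :=
        integral_mono_on hy (intervalIntegrable_rpow_sub_one_mul_exp_neg hs)
          (intervalIntegrable_rpow' (by linarith)) fun _ ht =>
            mul_le_of_le_one_right (rpow_nonneg ht.1 _) (exp_le_one_iff.mpr (by linarith [ht.1]))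
    _ = y ^ s / s := by
        rw [integral_rpow (Or.inl (by linarith)), sub_add_cancel, zero_rpow hs.ne', sub_zero]

/-- Integration by parts against `-e^{-t}`. -/
theorem lowerGamma_add_one (hs : 0 < s) (hy : 0 ≤ y) :
    lowerGamma (s + 1) y = s * lowerGamma s y - y ^ s * exp (-y) := by
  have hderiv : ∀ t ∈ Set.Ioo (0:ℝ) y, HasDerivAt (fun t : ℝ => -(t ^ s * exp (-t)))
      (t ^ s * exp (-t) - s * (t ^ (s - 1) * exp (-t))) t := by
    intro t ht
    exact (((hasDerivAt_rpow_const (Or.inl ht.1.ne')).mul (hasDerivAt_neg t).exp).neg).congr_deriv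
      (by ring)
  have hcont : ContinuousOn (fun t : ℝ => -(t ^ s * exp (-t))) (Set.Icc 0 y) :=
    (((continuous_rpow_const hs.le).mul (by fun_prop)).neg).continuousOn
  have hint₁ : IntervalIntegrable (fun t : ℝ => t ^ s * exp (-t)) MeasureTheory.volume 0 y := by
    simpa using intervalIntegrable_rpow_sub_one_mul_exp_neg (s := s + 1) (y := y) (by linarith)
  have hint₀ := (intervalIntegrable_rpow_sub_one_mul_exp_neg (y := y) hs).const_mul s
  have hftc := integral_eq_sub_of_hasDerivAt_of_le hy hcont hderiv (hint₁.sub hint₀)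
  rw [integral_sub hint₁ hint₀, integral_const_mul, zero_rpow hs.ne'] at hftc
  simp only [lowerGamma, add_sub_cancel_right]
  linarith

theorem lowerGamma_div_Gamma_le (hs : 0 < s) (hy : 0 ≤ y) :
    lowerGamma s y / Gamma s ≤ y ^ s / Gamma (s + 1) := by
  rw [Gamma_add_one hs.ne', div_le_iff₀ (Gamma_pos_of_pos hs), div_mul_eq_mul_div,
    mul_div_mul_right _ _ (Gamma_pos_of_pos hs).ne']
  exact lowerGamma_le_rpow_div hs hy

theorem lowerGamma_div_Gamma_eq_sum_add (hs : 0 < s) (hy : 0 ≤ y) (M : ℕ) :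
    lowerGamma s y / Gamma s = exp (-y) * ∑ m ∈ range M, y ^ (s + m) / Gamma (s + m + 1)
      + lowerGamma (s + M) y / Gamma (s + M) := by
  induction M with
  | zero => simp
  | succ M ih =>
    have hsM : 0 < s + M := by positivity
    have hstep : lowerGamma (s + M + 1) y / Gamma (s + M + 1)
        = lowerGamma (s + M) y / Gamma (s + M) - exp (-y) * (y ^ (s + M) / Gamma (s + M + 1)) := by
      rw [lowerGamma_add_one hsM hy, Gamma_add_one hsM.ne']
      field_simp [(Gamma_pos_of_pos hsM).ne']
    rw [ih, sum_range_succ, Nat.cast_succ, ← add_assoc, hstep]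
    ring

theorem hasSum_rpow_div_Gamma (hs : 0 < s) (hy : 0 ≤ y) :
    HasSum (fun m : ℕ => y ^ (s + m) / Gamma (s + m + 1)) (exp y * (lowerGamma s y / Gamma s)) := by
  set R : ℕ → ℝ := fun M => lowerGamma (s + M) y / Gamma (s + M)
  have hR_nonneg (M : ℕ) : 0 ≤ R M :=
    div_nonneg (lowerGamma_nonneg hy) (Gamma_pos_of_pos (by positivity)).le
  have hterm_nonneg (m : ℕ) : 0 ≤ y ^ (s + m) / Gamma (s + m + 1) :=
    div_nonneg (rpow_nonneg hy _) (Gamma_pos_of_pos (by positivity)).le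
  have hpartial (M : ℕ) : ∑ m ∈ range M, y ^ (s + m) / Gamma (s + m + 1)
      = exp y * (lowerGamma s y / Gamma s) - exp y * R M := by
    rw [lowerGamma_div_Gamma_eq_sum_add hs hy M, mul_add, ← mul_assoc, ← exp_add, add_neg_cancel,
      exp_zero, one_mul, add_sub_cancel_right]
  -- the partial sums are bounded, so the terms tend to zero, and they dominate the remainders
  have hsummable : Summable fun m : ℕ => y ^ (s + m) / Gamma (s + m + 1) :=
    summable_of_sum_range_le (c := exp y * (lowerGamma s y / Gamma s)) hterm_nonneg fun M => by
      rw [hpartial]; linarith [mul_nonneg (exp_pos y).le (hR_nonneg M)]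
  have hR : Tendsto R atTop (𝓝 0) :=
    squeeze_zero hR_nonneg (fun M => lowerGamma_div_Gamma_le (by positivity) hy)
      hsummable.tendsto_atTop_zero
  rw [hasSum_iff_tendsto_nat_of_nonneg hterm_nonneg, funext hpartial]
  simpa using tendsto_const_nhds.sub (hR.const_mul (exp y))

end LowerGamma

theorem hasSum_of_hasSum_mul_add {M : Type*} [AddCommMonoid M] [TopologicalSpace M]
    [ContinuousAdd M] {f : ℕ → M} {n : ℕ} (hn : 0 < n) {T : ℕ → M}
    (h : ∀ j < n, HasSum (fun m => f (m * n + j)) (T j)) :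
    HasSum f (∑ j ∈ range n, T j) := by
  have hclass : ∀ j ∈ range n, HasSum (fun k => if k % n = j then f k else 0) (T j) := by
    intro j hj
    have hj : j < n := mem_range.mp hj
    refine (Function.Injective.hasSum_iff (g := fun m => m * n + j) ?_ ?_).mp ?_
    · intro a b hab
      simpa [hn.ne'] using hab
    · rintro k hk
      rw [if_neg]
      rintro rfl
      exact hk ⟨k / n, Nat.div_add_mod' k n⟩
    · simpa [Function.comp_def, Nat.mul_add_mod_of_lt hj] using h j hj
  convert hasSum_sum hclass with k
  rw [sum_ite_eq, if_pos (mem_range.mpr (Nat.mod_lt k hn))]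

theorem integral_exp_neg_mul_sum_rpow_div_Gamma {ι : Type*} (s : Finset ι) {p : ι → ℝ}
    (hp : ∀ i ∈ s, 0 < p i) (y : ℝ) :
    ∫ t in (0:ℝ)..y, exp (-t) * ∑ i ∈ s, t ^ (p i - 1) / Gamma (p i)
      = ∑ i ∈ s, 1 / Gamma (p i) * lowerGamma (p i) y := by
  simp_rw [mul_sum]
  rw [integral_finsetSum fun i hi =>
    ((intervalIntegrable_rpow_sub_one_mul_exp_neg (hp i hi)).const_mul (1 / Gamma (p i))).congr
      (fun t _ => by ring)]
  refine sum_congr rfl fun i _ => ?_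
  rw [lowerGamma, ← integral_const_mul]
  congr 1 with t
  ring

section MittagLeffler

variable {n : ℕ} {x : ℝ}

theorem hasSum_mittagLeffler_one_div_nat_mul_add (hn : 0 < n) (hx : 0 < x) {b : ℝ} {j : ℕ}
    (hs : 0 < b - 1 + j / n) :
    HasSum (fun m : ℕ => x ^ (m * n + j) / Gamma (b + 1 / n * ↑(m * n + j)))
      (x ^ ((1 - b) * n) * exp (x ^ n) *
        (1 / Gamma (b - 1 + j / n) * lowerGamma (b - 1 + j / n) (x ^ n))) := by
  have hn₀ : (n : ℝ) ≠ 0 := by positivity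
  set s := b - 1 + j / n with hs_def
  have hterm (m : ℕ) : x ^ ((1 - b) * n) * ((x ^ n) ^ (s + m) / Gamma (s + m + 1))
      = x ^ (m * n + j) / Gamma (b + 1 / n * ↑(m * n + j)) := by
    have hexp : (1 - b) * n + n * (s + m) = ((m * n + j : ℕ) : ℝ) := by
      rw [hs_def]; push_cast; field_simp; ring
    have harg : s + m + 1 = b + 1 / n * ↑(m * n + j) := by
      rw [hs_def]; push_cast; field_simp; ring
    rw [← rpow_natCast x n, ← rpow_mul hx.le, mul_div_assoc', ← rpow_add hx, hexp, rpow_natCast,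
      harg]
  have h := (hasSum_rpow_div_Gamma hs (pow_pos hx n).le).mul_left (x ^ ((1 - b) * n))
  rw [show x ^ ((1 - b) * n) * exp (x ^ n) * (1 / Gamma s * lowerGamma s (x ^ n))
    = x ^ ((1 - b) * n) * (exp (x ^ n) * (lowerGamma s (x ^ n) / Gamma s)) by ring]
  simpa only [hterm] using h

theorem mittagLefflerReal_one_div_nat_of_one_lt (hn : 0 < n) (hx : 0 < x) {b : ℝ} (hb : 1 < b) :
    mittagLefflerReal (1 / n) b x = x ^ ((1 - b) * n) * exp (x ^ n) *
      ∑ j ∈ range n, 1 / Gamma (b - 1 + j / n) * lowerGamma (b - 1 + j / n) (x ^ n) := by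
  rw [mul_sum]
  exact (hasSum_of_hasSum_mul_add (f := fun k : ℕ => x ^ k / Gamma (b + 1 / n * k)) hn
    fun j _ => hasSum_mittagLeffler_one_div_nat_mul_add hn hx
      (add_pos_of_pos_of_nonneg (sub_pos.mpr hb) (by positivity))).tsum_eq

/-- For `b = 1` the multiples of `n` form the exponential series of `x ^ n`. -/
theorem mittagLefflerReal_one_div_nat_one (hn : 0 < n) (hx : 0 < x) :
    mittagLefflerReal (1 / n) 1 x = exp (x ^ n) *
      (1 + ∑ j ∈ Ioo 0 n, 1 / Gamma (j / n) * lowerGamma (j / n) (x ^ n)) := by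
  have hexp : HasSum (fun m : ℕ => x ^ (m * n + 0) / Gamma (1 + 1 / n * ↑(m * n + 0)))
      (exp (x ^ n)) := by
    have hterm (m : ℕ) :
        x ^ (m * n + 0) / Gamma (1 + 1 / n * ↑(m * n + 0)) = (x ^ n) ^ m / m.factorial := by
      rw [add_zero, ← pow_mul', ← Gamma_nat_eq_factorial, add_comm (1 : ℝ)]
      congr 2
      push_cast
      field_simp
    simpa only [hterm, exp_eq_exp_ℝ] using NormedSpace.expSeries_div_hasSum_exp (x ^ n)
  have hsum := hasSum_of_hasSum_mul_add (f := fun k : ℕ => x ^ k / Gamma (1 + 1 / n * k)) hn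
    (T := fun j => if j = 0 then exp (x ^ n) else
      exp (x ^ n) * (1 / Gamma (j / n) * lowerGamma (j / n) (x ^ n))) fun j _ => by
    rcases Nat.eq_zero_or_pos j with rfl | hj
    · simpa using hexp
    · simpa [hj.ne'] using hasSum_mittagLeffler_one_div_nat_mul_add (b := 1) hn hx
        (by rw [sub_self, zero_add]; positivity)
  rw [mittagLefflerReal, hsum.tsum_eq, range_eq_Ico, ← Ioo_insert_left hn, sum_insert (by simp),
    mul_add, mul_one, mul_sum]
  congr 1
  exact sum_congr rfl fun j hj => if_neg (mem_Ioo.mp hj).1.ne'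

end MittagLeffler

/-- Wiman-type closed form for parameter `1/n`: for `x > 0`,
(i) if `b > 1` then
`E_{1/n,b}(x) = x^{(1−b)n} e^{x^n} ∑_{j=0}^{n−1} (1/Γ(b−1+j/n)) ∫_0^{x^n} t^{(b−1+j/n)−1} e^{−t} dt`;
(ii) for `b = 1`,
`E_{1/n}(x) = e^{x^n} (1 + ∫_0^{x^n} e^{−t} ∑_{j=1}^{n−1} t^{j/n−1}/Γ(j/n) dt)`. -/
theorem mittagLeffler_one_div_nat (n : ℕ) (hn : 0 < n) (x : ℝ) (hx : 0 < x) :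
    (∀ b : ℝ, 1 < b →
      mittagLefflerReal (1 / n) b x
        = x ^ ((1 - b) * n) * Real.exp (x ^ n) *
            ∑ j ∈ Finset.range n, (1 / Real.Gamma (b - 1 + j / n)) *
              ∫ t in (0:ℝ)..(x ^ n), t ^ ((b - 1 + j / n) - 1) * Real.exp (-t)) ∧
    mittagLefflerReal (1 / n) 1 x
      = Real.exp (x ^ n) *
          (1 + ∫ t in (0:ℝ)..(x ^ n),
            Real.exp (-t) * ∑ j ∈ Finset.Ioo 0 n, t ^ ((j : ℝ) / n - 1) / Real.Gamma (j / n)) := by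
  refine ⟨fun b hb => mittagLefflerReal_one_div_nat_of_one_lt hn hx hb, ?_⟩
  rw [mittagLefflerReal_one_div_nat_one hn hx,
    integral_exp_neg_mul_sum_rpow_div_Gamma _ (fun j hj => by
      have := (mem_Ioo.mp hj).1; positivity)]
end

section
/- Laplace transform of the Mittag-Leffler function: let a > 0 and b > 0 be real numbers, x a real number, and s > 0 a real number with s^a > |x|. Then ∫_0^∞ e^{−s·t} · t^{b−1} · E_{a,b}(x · t^a) dt = s^{a−b} / (s^a − x). -/
/-!
Expanding `E_{a,b}` into its power series, the `k`-th term of the integrand is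
`x^k / Γ(b + a k) · t^{b + a k - 1} e^{-st}`, whose integral is `x^k / s^{b + a k}` by Euler's
integral for `Γ(b + a k)`. The same computation with `|x|` in place of `x` shows that the
integrals of the absolute values form a convergent geometric series of ratio `|x| / s^a`, so
sum and integral may be interchanged, and the geometric series sums to `s^{a-b} / (s^a - x)`.
-/

open MeasureTheory

namespace MittagLeffler

open Real Set

noncomputable def laplaceTerm (a b s y : ℝ) (k : ℕ) (t : ℝ) : ℝ :=
  exp (-(s * t)) * t ^ (b - 1) * ((y * t ^ a) ^ k / Gamma (b + a * k))

variable {a b s : ℝ}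

theorem tsum_laplaceTerm (y t : ℝ) :
    ∑' k, laplaceTerm a b s y k t
      = exp (-(s * t)) * t ^ (b - 1) * mittagLefflerReal a b (y * t ^ a) :=
  tsum_mul_left

theorem laplaceTerm_eq (y : ℝ) (k : ℕ) {t : ℝ} (ht : 0 < t) :
    laplaceTerm a b s y k t
      = y ^ k / Gamma (b + a * k) * (t ^ (b + a * k - 1) * exp (-(s * t))) := by
  have hpow : t ^ (b - 1) * (t ^ a) ^ k = t ^ (b + a * k - 1) := by
    rw [← rpow_mul_natCast ht.le, ← rpow_add ht]
    ring_nf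
  rw [laplaceTerm, mul_pow, ← hpow]
  ring

theorem integral_laplaceTerm (y : ℝ) (k : ℕ) (hk : 0 < b + a * k) (hs : 0 < s) :
    ∫ t in Ioi 0, laplaceTerm a b s y k t = (s ^ b)⁻¹ * (y / s ^ a) ^ k := by
  rw [setIntegral_congr_fun measurableSet_Ioi fun t ht ↦ laplaceTerm_eq y k ht,
    integral_const_mul, integral_rpow_mul_exp_neg_mul_Ioi hk hs, one_div, inv_rpow hs.le,
    rpow_add hs, rpow_mul_natCast hs.le, div_pow]
  field_simp

theorem integrableOn_laplaceTerm (y : ℝ) (k : ℕ) (hk : 0 < b + a * k) (hs : 0 < s) :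
    IntegrableOn (laplaceTerm a b s y k) (Ioi 0) := by
  have hGamma : IntegrableOn (fun t ↦ t ^ (b + a * k - 1) * exp (-(s * t))) (Ioi 0) :=
    .of_integral_ne_zero (by rw [integral_rpow_mul_exp_neg_mul_Ioi hk hs]; positivity)
  exact IntegrableOn.congr_fun (hGamma.const_mul _)
    (fun t ht ↦ (laplaceTerm_eq y k ht).symm) measurableSet_Ioi

theorem norm_laplaceTerm (y : ℝ) (k : ℕ) (hk : 0 < b + a * k) {t : ℝ} (ht : 0 < t) :
    ‖laplaceTerm a b s y k t‖ = laplaceTerm a b s |y| k t := by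
  have : 0 < Gamma (b + a * k) := Gamma_pos_of_pos hk
  rw [laplaceTerm_eq y k ht, laplaceTerm_eq |y| k ht, norm_mul, norm_mul, norm_div,
    norm_pow, Real.norm_eq_abs, Real.norm_of_nonneg this.le,
    Real.norm_of_nonneg (rpow_nonneg ht.le _), Real.norm_of_nonneg (exp_nonneg _)]

theorem summable_integral_norm_laplaceTerm {y : ℝ} (hk : ∀ k : ℕ, 0 < b + a * k) (hs : 0 < s)
    (hy : |y| < s ^ a) : Summable fun k ↦ ∫ t in Ioi 0, ‖laplaceTerm a b s y k t‖ := by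
  have hnorm (k : ℕ) : ∫ t in Ioi 0, ‖laplaceTerm a b s y k t‖
      = (s ^ b)⁻¹ * (|y| / s ^ a) ^ k := by
    rw [setIntegral_congr_fun measurableSet_Ioi fun t ht ↦ norm_laplaceTerm y k (hk k) ht,
      integral_laplaceTerm |y| k (hk k) hs]
  simp_rw [hnorm]
  have hratio : |y| / s ^ a < 1 := (div_lt_one (by positivity)).2 hy
  exact (summable_geometric_of_lt_one (by positivity) hratio).mul_left _

end MittagLeffler

open MittagLeffler in
/-- Laplace transform of the Mittag-Leffler function: for real `a > 0`, `b > 0`, real `x`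
and `s > 0` with `s^a > |x|`,
`∫_0^∞ e^{−st} t^{b−1} E_{a,b}(x t^a) dt = s^{a−b}/(s^a − x)`. -/
theorem mittagLeffler_laplace (a b x s : ℝ) (ha : 0 < a) (hb : 0 < b) (hs : 0 < s)
    (hsx : |x| < s ^ a) :
    ∫ t in Set.Ioi (0:ℝ),
        Real.exp (-(s * t)) * t ^ (b - 1) * mittagLefflerReal a b (x * t ^ a)
      = s ^ (a - b) / (s ^ a - x) := by
  have hk (k : ℕ) : 0 < b + a * k := by positivity
  have hsa : 0 < s ^ a := by positivity
  have hratio : |x / s ^ a| < 1 := by rwa [abs_div, abs_of_pos hsa, div_lt_one hsa]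
  calc ∫ t in Set.Ioi 0, Real.exp (-(s * t)) * t ^ (b - 1) * mittagLefflerReal a b (x * t ^ a)
      = ∫ t in Set.Ioi 0, ∑' k, laplaceTerm a b s x k t := by simp_rw [tsum_laplaceTerm]
    _ = ∑' k, ∫ t in Set.Ioi 0, laplaceTerm a b s x k t :=
      (integral_tsum_of_summable_integral_norm
        (fun k ↦ integrableOn_laplaceTerm x k (hk k) hs)
        (summable_integral_norm_laplaceTerm hk hs hsx)).symm
    _ = ∑' k : ℕ, (s ^ b)⁻¹ * (x / s ^ a) ^ k := by
      simp_rw [integral_laplaceTerm x _ (hk _) hs]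
    _ = s ^ (a - b) / (s ^ a - x) := by
      have : s ^ a - x ≠ 0 := by linarith [le_abs_self x]
      rw [tsum_mul_left, tsum_geometric_of_abs_lt_one hratio, Real.rpow_sub hs]
      field_simp
end

section
/- Generalized integration formula: let a > 0, b > 0, w > 0 and λ be real numbers and x > 0 a real number. Then (1/Γ(w)) · ∫_0^x (x − u)^{w−1} · u^{b−1} · E_{a,b}(λ · u^a) du = x^{b−1+w} · E_{a,b+w}(λ · x^a). -/
open intervalIntegral

/-!
Expanding `u^{b-1} E_{a,b}(λ u^a) = ∑ λ^k u^{b+ak-1} / Γ(b+ak)` and integrating term by term,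
each term is a Beta integral `∫_0^x (x-u)^{w-1} u^{c-1} du = Γ(w) Γ(c) / Γ(w+c) x^{w+c-1}`,
which trades `Γ(b+ak)` for `Γ(b+w+ak)`. The interchange is justified because the same
computation with `|λ|` gives the series of `E_{a,b+w}(|λ| x^a)`, which converges for every
argument thanks to the lower bound `Γ(y) ≥ e^{-(M+1)} M^{y-1}` (`y ≥ 1`, `M ≥ 0`).
-/

open MeasureTheory Real

theorem integral_sub_rpow_mul_rpow {w c x : ℝ} (hw : 0 < w) (hc : 0 < c) (hx : 0 < x) :
    ∫ u in (0:ℝ)..x, (x - u) ^ (w - 1) * u ^ (c - 1)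
      = Gamma w * Gamma c / Gamma (w + c) * x ^ (w + c - 1) := by
  have hbeta := Complex.betaIntegral_scaled c w hx
  rw [Complex.betaIntegral_eq_Gamma_mul_div _ _ (by simpa) (by simpa)] at hbeta
  apply Complex.ofReal_injective
  rw [← intervalIntegral.integral_ofReal]
  convert hbeta using 1
  · refine integral_congr fun u hu => ?_
    rw [Set.uIcc_of_le hx.le] at hu
    push_cast
    rw [Complex.ofReal_cpow (sub_nonneg.2 hu.2), Complex.ofReal_cpow hu.1]
    push_cast
    ring
  · rw [Complex.ofReal_mul, Complex.ofReal_cpow hx.le, add_comm w c]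
    push_cast
    rw [← Complex.ofReal_add, Complex.Gamma_ofReal, Complex.Gamma_ofReal, Complex.Gamma_ofReal]
    ring_nf

theorem exp_neg_mul_rpow_le_Gamma {y M : ℝ} (hy : 1 ≤ y) (hM : 0 ≤ M) :
    exp (-(M + 1)) * M ^ (y - 1) ≤ Gamma y := by
  have hint : IntegrableOn (fun t => exp (-t) * t ^ (y - 1)) (Set.Ioi 0) :=
    GammaIntegral_convergent (by linarith)
  have hsub : Set.Ioc M (M + 1) ⊆ Set.Ioi 0 := fun t ht => hM.trans_lt ht.1
  calc exp (-(M + 1)) * M ^ (y - 1)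
      = ∫ _ in Set.Ioc M (M + 1), exp (-(M + 1)) * M ^ (y - 1) := by simp
    _ ≤ ∫ t in Set.Ioc M (M + 1), exp (-t) * t ^ (y - 1) := by
        refine setIntegral_mono_on (integrableOn_const (by simp)) (hint.mono_set hsub)
          measurableSet_Ioc fun t ht => ?_
        gcongr <;> linarith [ht.1, ht.2]
    _ ≤ ∫ t in Set.Ioi 0, exp (-t) * t ^ (y - 1) :=
        setIntegral_mono_set hint
          (ae_restrict_of_forall_mem measurableSet_Ioi fun t ht => by
            have : (0:ℝ) < t := ht
            positivity)
          hsub.eventuallyLE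
    _ = Gamma y := (Gamma_eq_integral (by linarith)).symm

theorem summable_pow_div_Gamma_add_mul {a : ℝ} (ha : 0 < a) (b z : ℝ) :
    Summable fun k : ℕ => z ^ k / Gamma (b + a * k) := by
  set M := (|z| + 1) ^ a⁻¹
  have hM : 0 < M := by positivity
  have hMa : M ^ a = |z| + 1 := by
    rw [← rpow_mul (by positivity), inv_mul_cancel₀ ha.ne', rpow_one]
  have hratio : |z| / M ^ a < 1 := by
    rw [hMa, div_lt_one (by positivity)]; linarith
  refine Summable.of_norm_bounded_eventually_nat
    ((summable_geometric_of_lt_one (by positivity) hratio).mul_left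
      (exp (M + 1) * M ^ (1 - b))) ?_
  filter_upwards [Filter.eventually_ge_atTop ⌈(1 - b) / a⌉₊] with k hk
  have hy : 1 ≤ b + a * k := by
    have := (div_le_iff₀' ha).1 ((Nat.le_ceil _).trans (Nat.cast_le.2 hk))
    linarith
  have hpow : M ^ (b + a * k - 1) = M ^ (b - 1) * (M ^ a) ^ k := by
    rw [← rpow_natCast, ← rpow_mul hM.le, ← rpow_add hM]
    ring_nf
  have hΓ := exp_neg_mul_rpow_le_Gamma hy hM.le
  rw [hpow] at hΓ
  calc ‖z ^ k / Gamma (b + a * k)‖ = |z| ^ k / Gamma (b + a * k) := by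
        rw [norm_div, norm_pow, Real.norm_eq_abs,
          Real.norm_of_nonneg (Gamma_pos_of_pos (by linarith)).le]
    _ ≤ |z| ^ k / (exp (-(M + 1)) * (M ^ (b - 1) * (M ^ a) ^ k)) := by
        gcongr
    _ = exp (M + 1) * M ^ (1 - b) * (|z| / M ^ a) ^ k := by
        rw [exp_neg, show 1 - b = -(b - 1) by ring, rpow_neg hM.le, div_pow]
        field_simp

theorem integral_sub_rpow_mul_tsum {w x : ℝ} (hw : 0 < w) (hx : 0 < x) {coef e : ℕ → ℝ}
    (he : ∀ k, 0 < e k)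
    (hsum : Summable fun k => |coef k| * (Gamma w * Gamma (e k) / Gamma (w + e k) *
      x ^ (w + e k - 1))) :
    ∫ u in (0:ℝ)..x, (x - u) ^ (w - 1) * ∑' k, coef k * u ^ (e k - 1)
      = ∑' k, coef k * (Gamma w * Gamma (e k) / Gamma (w + e k) * x ^ (w + e k - 1)) := by
  set F : ℕ → ℝ → ℝ := fun k u => coef k * ((x - u) ^ (w - 1) * u ^ (e k - 1))
  have hint : ∀ k, Integrable (F k) (volume.restrict (Set.Ioc 0 x)) := fun k => by
    have hker : IntervalIntegrable (fun u => (x - u) ^ (w - 1) * u ^ (e k - 1)) volume 0 x := by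
      refine intervalIntegrable_of_integral_ne_zero ?_
      rw [integral_sub_rpow_mul_rpow hw (he k) hx]
      have := Gamma_pos_of_pos hw
      have := Gamma_pos_of_pos (he k)
      have := Gamma_pos_of_pos (add_pos hw (he k))
      positivity
    exact Integrable.const_mul hker.1 (coef k)
  have hnorm : ∀ k, ∫ u in Set.Ioc 0 x, ‖F k u‖
      = |coef k| * (Gamma w * Gamma (e k) / Gamma (w + e k) * x ^ (w + e k - 1)) := fun k => by
    rw [← integral_sub_rpow_mul_rpow hw (he k) hx, integral_of_le hx.le,
      ← MeasureTheory.integral_const_mul]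
    refine setIntegral_congr_fun measurableSet_Ioc fun u hu => ?_
    rw [norm_mul, Real.norm_eq_abs, Real.norm_of_nonneg]
    exact mul_nonneg (rpow_nonneg (sub_nonneg.2 hu.2) _) (rpow_nonneg hu.1.le _)
  calc ∫ u in (0:ℝ)..x, (x - u) ^ (w - 1) * ∑' k, coef k * u ^ (e k - 1)
      = ∫ u in Set.Ioc 0 x, ∑' k, F k u := by
        simp only [integral_of_le hx.le, F, ← tsum_mul_left, mul_left_comm]
    _ = ∑' k, ∫ u in Set.Ioc 0 x, F k u :=
        (integral_tsum_of_summable_integral_norm hint (by simpa only [hnorm] using hsum)).symm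
    _ = _ := tsum_congr fun k => by
        rw [MeasureTheory.integral_const_mul, ← integral_of_le hx.le,
          integral_sub_rpow_mul_rpow hw (he k) hx]

theorem rpow_mul_mittagLefflerReal_eq_tsum {u : ℝ} (hu : 0 < u) (a b lam : ℝ) :
    u ^ (b - 1) * mittagLefflerReal a b (lam * u ^ a)
      = ∑' k : ℕ, lam ^ k / Gamma (b + a * k) * u ^ (b + a * k - 1) := by
  rw [mittagLefflerReal, ← tsum_mul_left]
  refine tsum_congr fun k => ?_
  rw [mul_pow, ← rpow_natCast (u ^ a), ← rpow_mul hu.le, ← sub_add_eq_add_sub, rpow_add hu]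
  ring

/-- Generalized integration formula: for real `a, b, w > 0`, real `λ` and `x > 0`,
`(1/Γ(w)) ∫_0^x (x−u)^{w−1} u^{b−1} E_{a,b}(λ u^a) du = x^{b−1+w} E_{a,b+w}(λ x^a)`. -/
theorem mittagLeffler_integration (a b w lam x : ℝ) (ha : 0 < a) (hb : 0 < b) (hw : 0 < w)
    (hx : 0 < x) :
    (1 / Real.Gamma w) *
        ∫ u in (0:ℝ)..x, (x - u) ^ (w - 1) * u ^ (b - 1) * mittagLefflerReal a b (lam * u ^ a)
      = x ^ (b - 1 + w) * mittagLefflerReal a (b + w) (lam * x ^ a) := by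
  have hexp : ∀ k : ℕ, 0 < b + a * k := fun k => by positivity
  have hterm : ∀ (t : ℝ) (k : ℕ), t ^ k / Gamma (b + a * k) * (Gamma w * Gamma (b + a * k) /
      Gamma (w + (b + a * k)) * x ^ (w + (b + a * k) - 1))
        = Gamma w * x ^ (b - 1 + w) * ((t * x ^ a) ^ k / Gamma (b + w + a * k)) := fun t k => by
    have := (Gamma_pos_of_pos (hexp k)).ne'
    rw [show w + (b + a * k) = b + w + a * k by ring,
      show b + w + a * k - 1 = (b - 1 + w) + a * k by ring, rpow_add hx, rpow_mul hx.le,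
      rpow_natCast]
    field_simp
    ring
  have hsum : Summable fun k : ℕ => |lam ^ k / Gamma (b + a * k)| * (Gamma w *
      Gamma (b + a * k) / Gamma (w + (b + a * k)) * x ^ (w + (b + a * k) - 1)) := by
    refine ((summable_pow_div_Gamma_add_mul ha (b + w) (|lam| * x ^ a)).mul_left
      (Gamma w * x ^ (b - 1 + w))).congr fun k => ?_
    rw [abs_div, abs_pow, abs_of_pos (Gamma_pos_of_pos (hexp k)), hterm]
  have hΓ := (Gamma_pos_of_pos hw).ne'
  rw [intervalIntegral.integral_congr_ae (Filter.Eventually.of_forall fun u hu => by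
      rw [mul_assoc, rpow_mul_mittagLefflerReal_eq_tsum (Set.uIoc_of_le hx.le ▸ hu).1]),
    integral_sub_rpow_mul_tsum hw hx hexp hsum, tsum_congr (hterm lam), tsum_mul_left,
    mittagLefflerReal]
  field_simp
end

section
/- Integration of a product of Mittag-Leffler functions: let a > 0, b > 0, w > 0 be real numbers, λ ≠ μ real numbers, and x > 0 a real number. Then ∫_0^x (x − u)^{w−1} · u^{b−1} · E_{a,b}(λ · u^a) · E_{a,w}(μ · (x − u)^a) du = x^{b+w−1} · ( λ · E_{a,b+w}(λ · x^a) − μ · E_{a,b+w}(μ · x^a) ) / (λ − μ). -/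
/-!
Expand both Mittag-Leffler functions into their power series. The integrand becomes the double
series over `(k, j)` of `λ^k μ^j u^(b+ak-1) (x-u)^(w+aj-1) / (Γ(b+ak) Γ(w+aj))`, and each term
integrates, by Euler's Beta integral, to `x^(b+w-1) (λ x^a)^k (μ x^a)^j / Γ(b+w+a(k+j))`.
Termwise integration is justified by absolute convergence, which reduces to the convergence of
`∑ z^n / Γ(β+αn)`; the ratio test applies since `Γ(s+α) ≥ (s-1)^α Γ(s)` by log-convexity of `Γ`.
Grouping the double series along `k + j = n` and using
`∑_{k+j=n} A^k B^j = (A^(n+1) - B^(n+1)) / (A - B)` gives the right-hand side.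
-/

open intervalIntegral

open Filter Finset

namespace Real

theorem rpow_sub_one_mul_Gamma_le_Gamma_add {s α : ℝ} (hs : 1 < s) (hα : 0 < α) :
    (s - 1) ^ α * Gamma s ≤ Gamma (s + α) := by
  have hΓs : 0 < Gamma s := Gamma_pos_of_pos (by linarith)
  -- compare the slopes of the convex `log ∘ Γ` on `[s - 1, s]` and `[s, s + α]`
  have hslope := convexOn_log_Gamma.slope_mono_adjacent (x := s - 1) (y := s) (z := s + α)
    (Set.mem_Ioi.2 (by linarith)) (Set.mem_Ioi.2 (by linarith)) (by linarith) (by linarith)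
  have hrec : Gamma s = (s - 1) * Gamma (s - 1) := by
    simpa using Gamma_add_one (s := s - 1) (by linarith)
  have hΓs1 : 0 < Gamma (s - 1) := Gamma_pos_of_pos (by linarith)
  simp only [Function.comp_apply, sub_sub_cancel, div_one, add_sub_cancel_left] at hslope
  rw [hrec, log_mul (by linarith) hΓs1.ne', add_sub_cancel_right, le_div_iff₀ hα] at hslope
  rw [← log_le_log_iff (by positivity) (Gamma_pos_of_pos (by linarith)),
    log_mul (by positivity) hΓs.ne', log_rpow (by linarith), hrec, log_mul (by linarith) hΓs1.ne']
  linarith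

theorem summable_pow_div_Gamma {α : ℝ} (hα : 0 < α) (β z : ℝ) :
    Summable fun n : ℕ => z ^ n / Gamma (β + α * n) := by
  have hs : Tendsto (fun n : ℕ => β + α * n) atTop atTop :=
    tendsto_atTop_add_const_left _ _ (tendsto_natCast_atTop_atTop.const_mul_atTop hα)
  have hgrowth : Tendsto (fun n : ℕ => (β + α * n - 1) ^ α) atTop atTop :=
    (tendsto_rpow_atTop hα).comp (tendsto_atTop_add_const_right _ _ hs)
  refine summable_of_ratio_norm_eventually_le (r := 1 / 2) (by norm_num) ?_
  filter_upwards [hs.eventually_ge_atTop 2, hgrowth.eventually_ge_atTop (2 * |z|)]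
    with n hn2 hnz
  have hΓ : 0 < Gamma (β + α * n) := Gamma_pos_of_pos (by linarith)
  have hΓα : (β + α * n - 1) ^ α * Gamma (β + α * n) ≤ Gamma (β + α * n + α) :=
    rpow_sub_one_mul_Gamma_le_Gamma_add (by linarith) hα
  have hΓ' : 0 < Gamma (β + α * n + α) := Gamma_pos_of_pos (by positivity)
  rw [Nat.cast_succ, mul_add_one, ← add_assoc, norm_div, norm_div, norm_pow, norm_pow,
    pow_succ, norm_of_nonneg hΓ.le, norm_of_nonneg hΓ'.le, Real.norm_eq_abs,
    div_le_iff₀ hΓ']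
  calc |z| ^ n * |z| ≤ |z| ^ n * ((β + α * n - 1) ^ α / 2) := by gcongr; linarith
    _ = 1 / 2 * (|z| ^ n / Gamma (β + α * n)) * ((β + α * n - 1) ^ α * Gamma (β + α * n)) := by
      field_simp
    _ ≤ 1 / 2 * (|z| ^ n / Gamma (β + α * n)) * Gamma (β + α * n + α) := by gcongr

end Real

theorem sum_antidiagonal_pow_mul_pow_le {s t : ℝ} (hs : 0 ≤ s) (ht : 0 ≤ t) (n : ℕ) :
    ∑ p ∈ antidiagonal n, s ^ p.1 * t ^ p.2 ≤ (s + t) ^ n := by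
  rw [(Commute.all s t).add_pow']
  refine sum_le_sum fun p hp => ?_
  have hchoose : 1 ≤ n.choose p.1 := Nat.choose_pos (HasAntidiagonal.antidiagonal.fst_le hp)
  rw [nsmul_eq_mul]
  exact le_mul_of_one_le_left (by positivity) (by exact_mod_cast hchoose)

theorem sum_antidiagonal_pow_mul_pow_mul_sub {R : Type*} [CommRing R] (A B : R) (n : ℕ) :
    (∑ p ∈ antidiagonal n, A ^ p.1 * B ^ p.2) * (A - B) = A ^ (n + 1) - B ^ (n + 1) := by
  rw [Nat.sum_antidiagonal_eq_sum_range_succ (fun i j => A ^ i * B ^ j), ← geom_sum₂_mul]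
  refine congrArg (· * (A - B)) (sum_congr rfl fun i _ => ?_)
  rw [Nat.add_sub_cancel]

theorem summable_prod_of_summable_sum_antidiagonal {f : ℕ × ℕ → ℝ} (hf₀ : ∀ p, 0 ≤ f p)
    (hf : Summable fun n => ∑ p ∈ antidiagonal n, f p) : Summable f := by
  refine HasAntidiagonal.sigmaAntidiagonalEquivProd.summable_iff.mp
    ((summable_sigma_of_nonneg fun _ => hf₀ _).2 ⟨fun n => (hasSum_fintype _).summable, ?_⟩)
  simpa [tsum_fintype, sum_attach] using hf

theorem tsum_prod_eq_tsum_sum_antidiagonal {f : ℕ × ℕ → ℝ} (hf : Summable f) :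
    ∑' p, f p = ∑' n, ∑ p ∈ antidiagonal n, f p := by
  rw [← HasAntidiagonal.sigmaAntidiagonalEquivProd.tsum_eq f]
  refine ((HasAntidiagonal.sigmaAntidiagonalEquivProd.summable_iff.mpr hf).tsum_sigma'
      fun n => (hasSum_fintype _).summable).trans ?_
  simp [tsum_fintype, sum_attach]

theorem summable_pow_mul_pow_mul_of_summable {s t : ℝ} (hs : 0 ≤ s) (ht : 0 ≤ t) {g : ℕ → ℝ}
    (hg₀ : ∀ n, 0 ≤ g n) (hg : Summable fun n => (s + t) ^ n * g n) :
    Summable fun p : ℕ × ℕ => s ^ p.1 * t ^ p.2 * g (p.1 + p.2) := by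
  have hterm₀ : ∀ p : ℕ × ℕ, 0 ≤ s ^ p.1 * t ^ p.2 * g (p.1 + p.2) := fun p =>
    mul_nonneg (by positivity) (hg₀ _)
  refine summable_prod_of_summable_sum_antidiagonal hterm₀
    (hg.of_nonneg_of_le (fun n => sum_nonneg fun p _ => hterm₀ p) fun n => ?_)
  rw [sum_congr rfl fun p hp => by rw [mem_antidiagonal.mp hp], ← sum_mul]
  exact mul_le_mul_of_nonneg_right (sum_antidiagonal_pow_mul_pow_le hs ht n) (hg₀ n)

theorem tsum_pow_mul_pow_mul_eq {A B : ℝ} (hAB : A ≠ B) {g : ℕ → ℝ}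
    (h : Summable fun p : ℕ × ℕ => A ^ p.1 * B ^ p.2 * g (p.1 + p.2)) :
    ∑' p : ℕ × ℕ, A ^ p.1 * B ^ p.2 * g (p.1 + p.2)
      = (A * ∑' n, A ^ n * g n - B * ∑' n, B ^ n * g n) / (A - B) := by
  have hA : Summable fun n => A ^ n * g n := by
    simpa [Function.comp_def] using
      h.comp_injective (i := fun n : ℕ => (n, 0)) fun m n hmn => congrArg Prod.fst hmn
  have hB : Summable fun n => B ^ n * g n := by
    simpa [Function.comp_def] using
      h.comp_injective (i := fun n : ℕ => (0, n)) fun m n hmn => congrArg Prod.snd hmn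
  have hfiber : ∀ n, ∑ p ∈ antidiagonal n, A ^ p.1 * B ^ p.2 * g (p.1 + p.2)
      = (A * (A ^ n * g n) - B * (B ^ n * g n)) / (A - B) := by
    intro n
    rw [eq_div_iff (sub_ne_zero.mpr hAB), sum_congr rfl fun p hp => by rw [mem_antidiagonal.mp hp],
      ← sum_mul, mul_right_comm, sum_antidiagonal_pow_mul_pow_mul_sub]
    ring
  rw [tsum_prod_eq_tsum_sum_antidiagonal h, tsum_congr hfiber, tsum_div_const,
    (hA.mul_left A).tsum_sub (hB.mul_left B), tsum_mul_left, tsum_mul_left]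

namespace Real

theorem summable_pow_mul_pow_mul_inv_Gamma {α : ℝ} (hα : 0 < α) (β A B : ℝ) :
    Summable fun p : ℕ × ℕ => A ^ p.1 * B ^ p.2 * (Gamma (β + α * (p.1 + p.2 : ℕ)))⁻¹ := by
  refine Summable.of_norm_bounded (summable_pow_mul_pow_mul_of_summable (abs_nonneg A)
    (abs_nonneg B) (g := fun n => |(Gamma (β + α * n))⁻¹|) (fun n => abs_nonneg _) ?_)
    fun p => by rw [norm_mul, norm_mul, norm_pow, norm_pow]; rfl
  simpa only [abs_div, abs_pow, div_eq_mul_inv, abs_mul,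
    abs_of_nonneg (add_nonneg (abs_nonneg A) (abs_nonneg B))] using
    (summable_pow_div_Gamma hα β (|A| + |B|)).abs

theorem integral_rpow_mul_one_sub_rpow {p q : ℝ} (hp : 0 < p) (hq : 0 < q) :
    ∫ t in (0:ℝ)..1, t ^ (p - 1) * (1 - t) ^ (q - 1) = Gamma p * Gamma q / Gamma (p + q) := by
  have hbeta : Complex.betaIntegral p q
      = ((∫ t in (0:ℝ)..1, t ^ (p - 1) * (1 - t) ^ (q - 1) : ℝ) : ℂ) := by
    rw [Complex.betaIntegral, ← integral_ofReal]
    refine integral_congr fun t ht => ?_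
    rw [Set.uIcc_of_le zero_le_one] at ht
    rw [Complex.ofReal_mul, Complex.ofReal_cpow ht.1, Complex.ofReal_cpow (by linarith [ht.2])]
    push_cast
    rfl
  have key := Complex.Gamma_mul_Gamma_eq_betaIntegral
    (s := (p : ℂ)) (t := (q : ℂ)) (by simpa using hp) (by simpa using hq)
  rw [hbeta, ← Complex.ofReal_add, Complex.Gamma_ofReal, Complex.Gamma_ofReal,
    Complex.Gamma_ofReal, ← Complex.ofReal_mul, ← Complex.ofReal_mul] at key
  rw [eq_div_iff (Gamma_pos_of_pos (by linarith)).ne', mul_comm]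
  exact_mod_cast key.symm

theorem integral_rpow_mul_sub_rpow {p q x : ℝ} (hp : 0 < p) (hq : 0 < q) (hx : 0 < x) :
    ∫ u in (0:ℝ)..x, u ^ (p - 1) * (x - u) ^ (q - 1)
      = x ^ (p + q - 1) * (Gamma p * Gamma q / Gamma (p + q)) := by
  have hscale := smul_integral_comp_mul_left (a := 0) (b := 1)
    (fun u => u ^ (p - 1) * (x - u) ^ (q - 1)) x
  rw [mul_zero, mul_one, smul_eq_mul] at hscale
  rw [← hscale, integral_congr (g := fun t => x ^ (p - 1) * x ^ (q - 1) *
      (t ^ (p - 1) * (1 - t) ^ (q - 1))) fun t ht => ?_, integral_const_mul,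
    integral_rpow_mul_one_sub_rpow hp hq, show p + q - 1 = 1 + (p - 1) + (q - 1) by ring,
    rpow_add hx, rpow_add hx, rpow_one, mul_assoc, mul_assoc, mul_assoc]
  rw [Set.uIcc_of_le zero_le_one] at ht
  simp only
  rw [show x - x * t = x * (1 - t) by ring, mul_rpow hx.le ht.1,
    mul_rpow hx.le (by linarith [ht.2])]
  ring

theorem intervalIntegrable_rpow_mul_sub_rpow {p q x : ℝ} (hp : 0 < p) (hq : 0 < q)
    (hx : 0 < x) :
    IntervalIntegrable (fun u => u ^ (p - 1) * (x - u) ^ (q - 1)) MeasureTheory.volume 0 x := by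
  -- a non-integrable function has integral `0`
  refine intervalIntegrable_of_integral_ne_zero ?_
  rw [integral_rpow_mul_sub_rpow hp hq hx]
  have := Gamma_pos_of_pos hp
  have := Gamma_pos_of_pos hq
  have := Gamma_pos_of_pos (add_pos hp hq)
  positivity

end Real

theorem intervalIntegral.integral_tsum_of_summable_integral_norm {ι E : Type*} [Countable ι]
    [NormedAddCommGroup E] [NormedSpace ℝ E] {μ : MeasureTheory.Measure ℝ} {F : ι → ℝ → E}
    {a b : ℝ} (hab : a ≤ b) (hF : ∀ i, IntervalIntegrable (F i) μ a b)
    (hs : Summable fun i => ∫ u in a..b, ‖F i u‖ ∂μ) :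
    ∑' i, ∫ u in a..b, F i u ∂μ = ∫ u in a..b, ∑' i, F i u ∂μ := by
  simp only [integral_of_le hab] at hs ⊢
  exact MeasureTheory.integral_tsum_of_summable_integral_norm (fun i => (hF i).1) hs

noncomputable def rpowMittagLefflerTerm (a b c : ℝ) (k : ℕ) (u : ℝ) : ℝ :=
  c ^ k / Real.Gamma (b + a * k) * u ^ (b + a * k - 1)

section MittagLefflerTerms

variable {a : ℝ}

theorem hasSum_rpowMittagLefflerTerm (ha : 0 < a) (b c : ℝ) {u : ℝ} (hu : 0 < u) :
    HasSum (fun k => rpowMittagLefflerTerm a b c k u)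
      (u ^ (b - 1) * mittagLefflerReal a b (c * u ^ a)) := by
  have hterm : ∀ k : ℕ, rpowMittagLefflerTerm a b c k u
      = u ^ (b - 1) * ((c * u ^ a) ^ k / Real.Gamma (b + a * k)) := fun k => by
    rw [rpowMittagLefflerTerm, mul_pow, ← Real.rpow_natCast (u ^ a), ← Real.rpow_mul hu.le,
      show b + a * k - 1 = b - 1 + a * k by ring, Real.rpow_add hu]
    ring
  rw [mittagLefflerReal]
  simpa only [hterm] using
    (Real.summable_pow_div_Gamma ha b (c * u ^ a)).hasSum.mul_left (u ^ (b - 1))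

theorem hasSum_rpowMittagLefflerTerm_mul (ha : 0 < a) (b w c d : ℝ) {u v : ℝ} (hu : 0 < u)
    (hv : 0 < v) :
    HasSum (fun p : ℕ × ℕ => rpowMittagLefflerTerm a b c p.1 u * rpowMittagLefflerTerm a w d p.2 v)
      (u ^ (b - 1) * mittagLefflerReal a b (c * u ^ a)
        * (v ^ (w - 1) * mittagLefflerReal a w (d * v ^ a))) := by
  have hb := hasSum_rpowMittagLefflerTerm ha b c hu
  have hw := hasSum_rpowMittagLefflerTerm ha w d hv
  exact hb.mul hw <| summable_mul_of_summable_norm (f := fun k => rpowMittagLefflerTerm a b c k u)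
    (g := fun k => rpowMittagLefflerTerm a w d k v) (summable_norm_iff.mpr hb.summable)
    (summable_norm_iff.mpr hw.summable)

theorem abs_rpowMittagLefflerTerm {b : ℝ} (ha : 0 ≤ a) (hb : 0 < b) (c : ℝ) (k : ℕ) {u : ℝ}
    (hu : 0 ≤ u) : |rpowMittagLefflerTerm a b c k u| = rpowMittagLefflerTerm a b |c| k u := by
  have hΓ : 0 < Real.Gamma (b + a * k) := Real.Gamma_pos_of_pos (by positivity)
  rw [rpowMittagLefflerTerm, rpowMittagLefflerTerm, abs_mul, abs_div, abs_pow,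
    abs_of_pos hΓ, abs_of_nonneg (Real.rpow_nonneg hu _)]

theorem rpowMittagLefflerTerm_mul_eq (b w c d x : ℝ) (k j : ℕ) :
    (fun u => rpowMittagLefflerTerm a b c k u * rpowMittagLefflerTerm a w d j (x - u))
      = fun u => c ^ k / Real.Gamma (b + a * k) * (d ^ j / Real.Gamma (w + a * j)) *
          (u ^ (b + a * k - 1) * (x - u) ^ (w + a * j - 1)) :=
  funext fun u => by simp only [rpowMittagLefflerTerm]; ring

theorem intervalIntegrable_rpowMittagLefflerTerm_mul {b w x : ℝ} (ha : 0 ≤ a) (hb : 0 < b)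
    (hw : 0 < w) (hx : 0 < x) (c d : ℝ) (k j : ℕ) :
    IntervalIntegrable
      (fun u => rpowMittagLefflerTerm a b c k u * rpowMittagLefflerTerm a w d j (x - u))
      MeasureTheory.volume 0 x := by
  rw [rpowMittagLefflerTerm_mul_eq]
  exact (Real.intervalIntegrable_rpow_mul_sub_rpow (by positivity) (by positivity) hx).const_mul _

theorem integral_rpowMittagLefflerTerm_mul {b w x : ℝ} (ha : 0 ≤ a) (hb : 0 < b) (hw : 0 < w)
    (hx : 0 < x) (c d : ℝ) (k j : ℕ) :
    ∫ u in (0:ℝ)..x, rpowMittagLefflerTerm a b c k u * rpowMittagLefflerTerm a w d j (x - u)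
      = x ^ (b + w - 1) *
          ((c * x ^ a) ^ k * (d * x ^ a) ^ j * (Real.Gamma (b + w + a * (k + j : ℕ)))⁻¹) := by
  have hΓb : 0 < Real.Gamma (b + a * k) := Real.Gamma_pos_of_pos (by positivity)
  have hΓw : 0 < Real.Gamma (w + a * j) := Real.Gamma_pos_of_pos (by positivity)
  rw [rpowMittagLefflerTerm_mul_eq, integral_const_mul,
    Real.integral_rpow_mul_sub_rpow (by positivity) (by positivity) hx,
    show b + a * k + (w + a * j) = b + w + a * (k + j : ℕ) by push_cast; ring,
    show b + w + a * (k + j : ℕ) - 1 = b + w - 1 + a * k + a * j by push_cast; ring,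
    Real.rpow_add hx, Real.rpow_add hx, Real.rpow_mul_natCast hx.le, Real.rpow_mul_natCast hx.le]
  field_simp
  ring

theorem integral_mittagLefflerReal_mul_eq_tsum {b w x : ℝ} (ha : 0 < a) (hb : 0 < b) (hw : 0 < w)
    (hx : 0 < x) (lam mu : ℝ) :
    (∫ u in (0:ℝ)..x, (x - u) ^ (w - 1) * u ^ (b - 1) *
        mittagLefflerReal a b (lam * u ^ a) * mittagLefflerReal a w (mu * (x - u) ^ a))
      = x ^ (b + w - 1) * ∑' p : ℕ × ℕ, (lam * x ^ a) ^ p.1 * (mu * x ^ a) ^ p.2 *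
          (Real.Gamma (b + w + a * (p.1 + p.2 : ℕ)))⁻¹ := by
  set F : ℕ × ℕ → ℝ → ℝ := fun p u =>
    rpowMittagLefflerTerm a b lam p.1 u * rpowMittagLefflerTerm a w mu p.2 (x - u)
  have hexpand : ∀ u ∈ Set.Ioo 0 x, (x - u) ^ (w - 1) * u ^ (b - 1) *
      mittagLefflerReal a b (lam * u ^ a) * mittagLefflerReal a w (mu * (x - u) ^ a)
        = ∑' p, F p u := fun u hu => by
    rw [(hasSum_rpowMittagLefflerTerm_mul ha b w lam mu hu.1 (sub_pos.2 hu.2)).tsum_eq]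
    ring
  have hnorm : ∀ p, ∫ u in (0:ℝ)..x, ‖F p u‖
      = x ^ (b + w - 1) * ((|lam| * x ^ a) ^ p.1 * (|mu| * x ^ a) ^ p.2 *
          (Real.Gamma (b + w + a * (p.1 + p.2 : ℕ)))⁻¹) := fun p => by
    rw [← integral_rpowMittagLefflerTerm_mul ha.le hb hw hx]
    refine integral_congr fun u hu => ?_
    rw [Set.uIcc_of_le hx.le] at hu
    rw [norm_mul, Real.norm_eq_abs, Real.norm_eq_abs, abs_rpowMittagLefflerTerm ha.le hb _ _ hu.1,
      abs_rpowMittagLefflerTerm ha.le hw _ _ (sub_nonneg.2 hu.2)]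
  rw [integral_congr_Ioo_of_le hx.le hexpand,
    ← intervalIntegral.integral_tsum_of_summable_integral_norm (F := F) hx.le
      (fun p => intervalIntegrable_rpowMittagLefflerTerm_mul ha.le hb hw hx lam mu p.1 p.2)
      (by simpa only [hnorm] using
        (Real.summable_pow_mul_pow_mul_inv_Gamma ha (b + w) _ _).mul_left (x ^ (b + w - 1))),
    ← tsum_mul_left]
  exact tsum_congr fun p => integral_rpowMittagLefflerTerm_mul ha.le hb hw hx lam mu p.1 p.2

end MittagLefflerTerms

/-- Integration of a product of Mittag-Leffler functions: for real `a, b, w > 0`, real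
`λ ≠ μ` and `x > 0`,
`∫_0^x (x−u)^{w−1} u^{b−1} E_{a,b}(λ u^a) E_{a,w}(μ (x−u)^a) du
  = x^{b+w−1} (λ E_{a,b+w}(λ x^a) − μ E_{a,b+w}(μ x^a))/(λ − μ)`. -/
theorem mittagLeffler_integration_product (a b w lam mu x : ℝ) (ha : 0 < a) (hb : 0 < b)
    (hw : 0 < w) (hlm : lam ≠ mu) (hx : 0 < x) :
    (∫ u in (0:ℝ)..x, (x - u) ^ (w - 1) * u ^ (b - 1) *
        mittagLefflerReal a b (lam * u ^ a) * mittagLefflerReal a w (mu * (x - u) ^ a))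
      = x ^ (b + w - 1) *
          (lam * mittagLefflerReal a (b + w) (lam * x ^ a)
            - mu * mittagLefflerReal a (b + w) (mu * x ^ a)) / (lam - mu) := by
  have hxa : 0 < x ^ a := Real.rpow_pos_of_pos hx a
  have hne : lam * x ^ a ≠ mu * x ^ a := fun h => hlm (mul_right_cancel₀ hxa.ne' h)
  rw [integral_mittagLefflerReal_mul_eq_tsum ha hb hw hx,
    tsum_pow_mul_pow_mul_eq (g := fun n => (Real.Gamma (b + w + a * n))⁻¹) hne
      (Real.summable_pow_mul_pow_mul_inv_Gamma ha (b + w) _ _)]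
  simp only [mittagLefflerReal, div_eq_mul_inv]
  field_simp
end

section
/- Möbius inversion for the Mittag-Leffler series: let x > 0 be a real number, b a complex number, and z a nonzero complex number, with z^t := exp(t·Log z) for real t (principal logarithm). Then z^x / Γ(b + x) = ∑_{n=1}^∞ μ(n) · ( E_{n·x, b}(z^{n·x}) − 1/Γ(b) ), where μ is the Möbius function, and the series converges absolutely. -/
open Filter Topology
open scoped Nat ArithmeticFunction.Moebius

namespace Complex

theorem norm_inv_Gamma_add_nat_le {u : ℂ} (hu : 1 ≤ u.re) (p : ℕ) :
    ‖(Gamma (u + p))⁻¹‖ ≤ ‖(Gamma u)⁻¹‖ / p ! := by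
  induction p with
  | zero => simp
  | succ p ih =>
    have hnorm : (p : ℝ) + 1 ≤ ‖u + p‖ :=
      le_trans (by simp only [add_re, natCast_re]; linarith) (re_le_norm _)
    have hne : u + p ≠ 0 := norm_pos_iff.mp (lt_of_lt_of_le (by positivity) hnorm)
    rw [Nat.cast_succ, ← add_assoc, Gamma_add_one _ hne, mul_inv, norm_mul, norm_inv]
    calc ‖u + p‖⁻¹ * ‖(Gamma (u + p))⁻¹‖ ≤ ((p : ℝ) + 1)⁻¹ * (‖(Gamma u)⁻¹‖ / p !) := by
          gcongr
      _ = ‖(Gamma u)⁻¹‖ / (p + 1) ! := by push_cast [Nat.factorial_succ]; field_simp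

theorem tendsto_exp_mul_norm_inv_Gamma (b : ℂ) (c : ℝ) :
    Tendsto (fun t : ℝ => Real.exp (c * t) * ‖(Gamma (b + t))⁻¹‖) atTop (𝓝 0) := by
  set g : ℝ → ℝ := fun t => Real.exp (c * t) * ‖(Gamma (b + t))⁻¹‖
  set K : ℕ := ⌈‖b‖⌉₊ + 1
  have hcont : Continuous g :=
    (Real.continuous_exp.comp (continuous_const_mul c)).mul
      (differentiable_one_div_Gamma.continuous.comp (continuous_const_add b |>.comp
        continuous_ofReal)).norm
  obtain ⟨M, hM⟩ := (isCompact_Icc (a := (K : ℝ)) (b := K + 1)).bddAbove_image hcont.continuousOn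
  -- every `t ≥ K` splits as `s + p` with `s ∈ [K, K + 1]`, where `Re (b + s) ≥ 1`
  have hbound (t : ℝ) (ht : (K : ℝ) ≤ t) :
      g t ≤ M * (Real.exp c ^ (⌊t⌋₊ - K) / (⌊t⌋₊ - K) !) := by
    set p := ⌊t⌋₊ - K
    set s := t - p
    have hKt : K ≤ ⌊t⌋₊ := Nat.le_floor ht
    have hp : (p : ℝ) = ⌊t⌋₊ - K := by push_cast [p, Nat.cast_sub hKt]; ring
    have hs : s ∈ Set.Icc (K : ℝ) (K + 1) := by
      constructor
      · have := Nat.floor_le (le_trans (Nat.cast_nonneg K) ht)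
        simp only [s, hp]; linarith
      · have := Nat.lt_floor_add_one t
        simp only [s, hp]; linarith
    have hre : 1 ≤ (b + s).re := by
      have h1 := Nat.le_ceil ‖b‖
      have h2 := neg_le_of_abs_le (abs_re_le_norm b)
      simp only [add_re, ofReal_re]
      simp only [K, Nat.cast_add, Nat.cast_one] at hs
      linarith [hs.1]
    calc g t = Real.exp c ^ p * (Real.exp (c * s) * ‖(Gamma ((b + s) + p))⁻¹‖) := by
          have ht : t = s + p := by simp [s]
          rw [ht, ← Real.exp_nat_mul, ← mul_assoc, ← Real.exp_add]
          simp only [g]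
          congr 4 <;> push_cast <;> ring
      _ ≤ Real.exp c ^ p * (Real.exp (c * s) * (‖(Gamma (b + s))⁻¹‖ / p !)) := by
          gcongr; exact norm_inv_Gamma_add_nat_le hre p
      _ = Real.exp c ^ p / p ! * g s := by simp only [g]; ring
      _ ≤ Real.exp c ^ p / p ! * M := by gcongr; exact hM ⟨s, hs, rfl⟩
      _ = _ := by ring
  have hlim : Tendsto (fun t : ℝ => M * (Real.exp c ^ (⌊t⌋₊ - K) / (⌊t⌋₊ - K) !)) atTop (𝓝 0) := by
    simpa using ((FloorSemiring.tendsto_pow_div_factorial_atTop (Real.exp c)).comp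
      ((tendsto_sub_atTop_nat K).comp tendsto_nat_floor_atTop)).const_mul M
  exact squeeze_zero' (Eventually.of_forall fun t => by positivity)
    ((eventually_ge_atTop (K : ℝ)).mono hbound) hlim

end Complex

open ArithmeticFunction in
theorem sum_divisorsAntidiagonal_moebius_zsmul {M : Type*} [AddCommGroup M] (f : ℕ → M) (n : ℕ) :
    ∑ d ∈ n.divisorsAntidiagonal, μ d.1 • f (d.1 * d.2) = if n = 1 then f 1 else 0 := by
  have hμ : ∑ d ∈ n.divisorsAntidiagonal, μ d.1 = if n = 1 then 1 else 0 := by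
    rw [Nat.sum_divisorsAntidiagonal (fun d _ => μ d), ← coe_mul_zeta_apply,
      moebius_mul_coe_zeta, one_apply]
  rw [Finset.sum_congr rfl fun d hd => by rw [(Nat.mem_divisorsAntidiagonal.mp hd).1],
    ← Finset.sum_smul, hμ]
  split_ifs with h <;> simp [h]

theorem norm_moebius_zsmul_le {E : Type*} [SeminormedAddCommGroup E] (n : ℕ) (x : E) :
    ‖μ n • x‖ ≤ ‖x‖ := by
  refine (norm_zsmul_le _ _).trans (mul_le_of_le_one_left (norm_nonneg _) ?_)
  rw [Int.norm_eq_abs]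
  exact mod_cast ArithmeticFunction.abs_moebius_le_one

theorem summable_norm_moebius_zsmul_tsum {E : Type*} [SeminormedAddCommGroup E] {f : ℕ → E}
    (hf : Summable fun p : ℕ × ℕ => ‖f ((p.1 + 1) * (p.2 + 1))‖) :
    Summable fun n : ℕ => ‖μ (n + 1) • ∑' k : ℕ, f ((n + 1) * (k + 1))‖ :=
  hf.prod.of_nonneg_of_le (fun _ => norm_nonneg _) fun n =>
    (norm_moebius_zsmul_le _ _).trans (norm_tsum_le_tsum_norm (hf.prod_factor n))

section MoebiusInversion

variable {E : Type*} [NormedAddCommGroup E] [CompleteSpace E] (f : ℕ → E)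

theorem hasSum_moebius_zsmul_pnat (hf : Summable fun c : ℕ+ × ℕ+ => ‖f (c.1 * c.2)‖) :
    HasSum (fun c : ℕ+ × ℕ+ => μ c.1 • f (c.1 * c.2)) (f 1) := by
  have hs : Summable fun c : ℕ+ × ℕ+ => μ c.1 • f (c.1 * c.2) :=
    hf.of_norm_bounded fun c => norm_moebius_zsmul_le _ _
  -- regroup `ℕ+ × ℕ+` as the disjoint union over `m` of the factorisations `m = n * k`
  rw [← sigmaAntidiagonalEquivProd.summable_iff] at hs
  have hfiber : ∀ n : ℕ+, HasSum (fun d : (n : ℕ).divisorsAntidiagonal =>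
      μ d.1.1 • f (d.1.1 * d.1.2)) (if n = 1 then f 1 else 0) := fun n => by
    convert hasSum_fintype _
    rw [Finset.univ_eq_attach, Finset.sum_attach (n : ℕ).divisorsAntidiagonal
      fun d => μ d.1 • f (d.1 * d.2), sum_divisorsAntidiagonal_moebius_zsmul]
    simp only [PNat.coe_eq_one_iff]
  rw [← sigmaAntidiagonalEquivProd.hasSum_iff]
  convert hs.hasSum
  exact (hasSum_ite_eq 1 (f 1)).unique (hs.hasSum.sigma hfiber)

theorem hasSum_moebius_zsmul_tsum (hf : Summable fun p : ℕ × ℕ => ‖f ((p.1 + 1) * (p.2 + 1))‖) :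
    HasSum (fun n : ℕ => μ (n + 1) • ∑' k : ℕ, f ((n + 1) * (k + 1))) (f 1) := by
  let e : ℕ × ℕ ≃ ℕ+ × ℕ+ := Equiv.pnatEquivNat.symm.prodCongr Equiv.pnatEquivNat.symm
  have hsum : HasSum (fun p : ℕ × ℕ => μ (p.1 + 1) • f ((p.1 + 1) * (p.2 + 1))) (f 1) :=
    e.hasSum_iff.mpr (hasSum_moebius_zsmul_pnat f (e.summable_iff.mp hf))
  exact hsum.prod_fiberwise fun n => (hf.prod_factor n).of_norm.hasSum.const_smul _

end MoebiusInversion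

theorem summable_norm_mul_succ_of_norm_le_geometric {E : Type*} [SeminormedAddCommGroup E]
    {f : ℕ → E} {C r : ℝ} (hr₀ : 0 ≤ r) (hr₁ : r < 1) (hf : ∀ m, ‖f m‖ ≤ C * r ^ m) :
    Summable fun p : ℕ × ℕ => ‖f ((p.1 + 1) * (p.2 + 1))‖ := by
  have hC : 0 ≤ C := by simpa using (norm_nonneg _).trans (hf 0)
  have hgeom := summable_geometric_of_lt_one hr₀ hr₁
  refine ((hgeom.mul_left C).mul_of_nonneg hgeom (fun _ => by positivity) fun _ => by positivity)
    |>.of_nonneg_of_le (fun _ => norm_nonneg _) fun p => ?_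
  calc ‖f ((p.1 + 1) * (p.2 + 1))‖ ≤ C * r ^ ((p.1 + 1) * (p.2 + 1)) := hf _
    _ ≤ C * r ^ (p.1 + p.2) :=
        mul_le_mul_of_nonneg_left (pow_le_pow_of_le_one hr₀ hr₁.le (by nlinarith)) hC
    _ = C * r ^ p.1 * r ^ p.2 := by rw [pow_add]; ring

noncomputable def mittagLefflerTerm (a b w : ℂ) (k : ℕ) : ℂ :=
  w ^ k / Complex.Gamma (b + a * k)

theorem mittagLeffler_natCast_mul_pow (n : ℕ) (a b w : ℂ) :
    mittagLeffler (n * a) b (w ^ n) = ∑' k : ℕ, mittagLefflerTerm a b w (n * k) := by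
  refine tsum_congr fun k => ?_
  rw [mittagLefflerTerm, ← pow_mul]
  push_cast
  ring_nf

theorem exists_norm_mittagLefflerTerm_le_mul_pow {x : ℝ} (hx : 0 < x) (b w : ℂ) {r : ℝ}
    (hr : 0 < r) : ∃ C, ∀ k : ℕ, ‖mittagLefflerTerm x b w k‖ ≤ C * r ^ k := by
  set c := Real.log (‖w‖ / r + 1) / x
  have hlim : Tendsto (fun k : ℕ => Real.exp (c * (k * x : ℝ)) *
      ‖(Complex.Gamma (b + (k * x : ℝ)))⁻¹‖) atTop (𝓝 0) :=
    (Complex.tendsto_exp_mul_norm_inv_Gamma b c).comp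
      (tendsto_natCast_atTop_atTop.atTop_mul_const hx)
  obtain ⟨C, hC⟩ := hlim.bddAbove_range
  refine ⟨C, fun k => ?_⟩
  have hexp : Real.exp (c * (k * x)) = (‖w‖ / r + 1) ^ k := by
    have hck : c * (k * x) = k * Real.log (‖w‖ / r + 1) := by
      simp only [c]
      field_simp
    rw [hck, Real.exp_nat_mul, Real.exp_log (by positivity)]
  calc ‖mittagLefflerTerm x b w k‖
      = (‖w‖ / r) ^ k * ‖(Complex.Gamma (b + (k * x : ℝ)))⁻¹‖ * r ^ k := by
        rw [mittagLefflerTerm, norm_div, norm_pow, div_pow, norm_inv]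
        push_cast
        field_simp
    _ ≤ (‖w‖ / r + 1) ^ k * ‖(Complex.Gamma (b + (k * x : ℝ)))⁻¹‖ * r ^ k := by
        gcongr
        linarith
    _ ≤ C * r ^ k := by
        gcongr
        rw [← hexp]
        exact hC ⟨k, rfl⟩

theorem mittagLeffler_moebius_inversion_general (x : ℝ) (hx : 0 < x) (b z : ℂ) :
    Summable (fun n : ℕ =>
      ‖(ArithmeticFunction.moebius (n + 1) : ℂ) *
        (mittagLeffler ((((n : ℕ) + 1) * x : ℝ) : ℂ) b (z ^ (((((n : ℕ) + 1) * x : ℝ)) : ℂ))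
          - 1 / Complex.Gamma b)‖) ∧
    z ^ (x : ℂ) / Complex.Gamma (b + (x : ℂ))
      = ∑' n : ℕ,
          (ArithmeticFunction.moebius (n + 1) : ℂ) *
            (mittagLeffler ((((n : ℕ) + 1) * x : ℝ) : ℂ) b (z ^ (((((n : ℕ) + 1) * x : ℝ)) : ℂ))
              - 1 / Complex.Gamma b) := by
  set f := mittagLefflerTerm x b (z ^ (x : ℂ))
  obtain ⟨C, hC⟩ := exists_norm_mittagLefflerTerm_le_mul_pow hx b (z ^ (x : ℂ)) one_half_pos
  have hf := summable_norm_mul_succ_of_norm_le_geometric (by norm_num) one_half_lt_one hC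
  have hrow (n : ℕ) : mittagLeffler ((((n : ℕ) + 1) * x : ℝ) : ℂ) b
      (z ^ (((((n : ℕ) + 1) * x : ℝ)) : ℂ)) - 1 / Complex.Gamma b =
        ∑' k : ℕ, f ((n + 1) * (k + 1)) := by
    have hcast : ((((n : ℕ) + 1) * x : ℝ) : ℂ) = ((n + 1 : ℕ) : ℂ) * x := by push_cast; ring
    rw [hcast, Complex.cpow_nat_mul, mittagLeffler_natCast_mul_pow,
      tsum_eq_zero_add' (f := fun k => f ((n + 1) * k)) (hf.prod_factor n).of_norm]
    simp [f, mittagLefflerTerm]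
  have habs := summable_norm_moebius_zsmul_tsum (f := f) hf
  have hsum := hasSum_moebius_zsmul_tsum f hf
  simp only [zsmul_eq_mul, ← hrow] at habs hsum
  exact ⟨habs, by simpa [f, mittagLefflerTerm] using hsum.tsum_eq.symm⟩

/-- Möbius inversion for the Mittag-Leffler series: for real `x > 0`, complex `b` and
`z ≠ 0` (with `z^t := exp(t Log z)` for real `t`, i.e. the principal power),
`z^x / Γ(b + x) = ∑_{n=1}^∞ μ(n) (E_{nx,b}(z^{nx}) − 1/Γ(b))`,
the series converging absolutely. -/
theorem mittagLeffler_moebius_inversion (x : ℝ) (hx : 0 < x) (b z : ℂ) (hz : z ≠ 0) :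
    Summable (fun n : ℕ =>
      ‖(ArithmeticFunction.moebius (n + 1) : ℂ) *
        (mittagLeffler ((((n : ℕ) + 1) * x : ℝ) : ℂ) b (z ^ (((((n : ℕ) + 1) * x : ℝ)) : ℂ))
          - 1 / Complex.Gamma b)‖) ∧
    z ^ (x : ℂ) / Complex.Gamma (b + (x : ℂ))
      = ∑' n : ℕ,
          (ArithmeticFunction.moebius (n + 1) : ℂ) *
            (mittagLeffler ((((n : ℕ) + 1) * x : ℝ) : ℂ) b (z ^ (((((n : ℕ) + 1) * x : ℝ)) : ℂ))
              - 1 / Complex.Gamma b) :=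
  mittagLeffler_moebius_inversion_general x hx b z
end
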